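/- arXiv:2007.11426 — 9 statements merged into one kernel-verified Lean document; each statement's English description precedes it below -/
import Mathlib

section
/- Let g satisfy Assumption (B1) and let s > 0. Then for every q ∈ ℝ and every u ∈ prox_{sg}(q) it holds q·u ≥ 0; in particular, if q > 0 then u ≥ 0, and if u > 0 then q ≥ 0. -/
/-!
Reflecting a minimizer `u` to `-u` leaves `g` unchanged by symmetry, so minimality against `-u`
gives `(u - q)² ≤ (u + q)²`, i.e. `q u ≥ 0`. For the `g`-terms to cancel, `g u` must be finite:
it is not `⊥` since `g` is bounded below, and not `⊤` since `u` does at least as well as `0`.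
-/

/-- `u ∈ prox_{s·g}(q)`: `u` is a global minimizer of `v ↦ ½(v − q)² + s·g(v)`,
where `g : ℝ → ℝ ∪ {+∞}` is modeled as an `EReal`-valued function. -/
def IsProx (g : ℝ → EReal) (s q u : ℝ) : Prop :=
  ∀ v : ℝ, (((u - q) ^ 2 / 2 : ℝ) : EReal) + (s : EReal) * g u ≤
    (((v - q) ^ 2 / 2 : ℝ) : EReal) + (s : EReal) * g v

namespace IsProx

variable {g : ℝ → EReal} {s q u : ℝ}

theorem apply_ne_top {v : ℝ} (hs : 0 < s) (hv : g v ≠ ⊤) (hu : IsProx g s q u) : g u ≠ ⊤ := by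
  intro htop
  have hle := hu v
  rw [htop, EReal.mul_top_of_pos (by exact_mod_cast hs),
    EReal.add_top_of_ne_bot (EReal.coe_ne_bot _), top_le_iff] at hle
  have hsv : (s : EReal) * g v ≠ ⊤ := by simp [EReal.mul_ne_top, hv, hs.le]
  exact EReal.add_ne_top (EReal.coe_ne_top _) hsv hle

theorem mul_nonneg (hsymm : ∀ x : ℝ, g (-x) = g x) (htop : g u ≠ ⊤) (hbot : g u ≠ ⊥)
    (hu : IsProx g s q u) : 0 ≤ q * u := by
  have hle := hu (-u)
  rw [hsymm u] at hle
  lift g u to ℝ using ⟨htop, hbot⟩ with a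
  have hreal : (u - q) ^ 2 / 2 + s * a ≤ (-u - q) ^ 2 / 2 + s * a := by exact_mod_cast hle
  nlinarith

end IsProx

theorem prox_sign_general (g : ℝ → EReal)
    (hbdd : ∃ c : ℝ, ∀ x : ℝ, (c : EReal) ≤ g x)
    (hsymm : ∀ x : ℝ, g (-x) = g x)
    (h0 : g 0 = 0)
    (s : ℝ) (hs : 0 < s) (q u : ℝ) (hu : IsProx g s q u) :
    0 ≤ q * u ∧ (0 < q → 0 ≤ u) ∧ (0 < u → 0 ≤ q) := by
  obtain ⟨c, hc⟩ := hbdd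
  have htop : g u ≠ ⊤ := hu.apply_ne_top (v := 0) hs (by simp [h0])
  have hbot : g u ≠ ⊥ := ne_bot_of_le_ne_bot (EReal.coe_ne_bot c) (hc u)
  have hqu := hu.mul_nonneg hsymm htop hbot
  exact ⟨hqu, nonneg_of_mul_nonneg_right hqu, nonneg_of_mul_nonneg_left hqu⟩

/-- under Assumption (B1), any `u ∈ prox_{s g}(q)` satisfies `q·u ≥ 0`;
in particular `q > 0 → u ≥ 0` and `u > 0 → q ≥ 0`. -/
theorem prox_sign (g : ℝ → EReal)
    (hproper : ∃ x : ℝ, g x ≠ ⊤)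
    (hbdd : ∃ c : ℝ, ∀ x : ℝ, (c : EReal) ≤ g x)
    (hlsc : LowerSemicontinuous g)
    (hsymm : ∀ x : ℝ, g (-x) = g x)
    (h0 : g 0 = 0)
    (s : ℝ) (hs : 0 < s) (q u : ℝ) (hu : IsProx g s q u) :
    0 ≤ q * u ∧ (0 < q → 0 ≤ u) ∧ (0 < u → 0 ≤ q) :=
  prox_sign_general g hbdd hsymm h0 s hs q u hu
end

section
/- Let Ω ⊂ ℝⁿ be Lebesgue measurable with finite measure, let u₀ > 0, and let u, v : Ω → ℝ be measurable functions such that for almost every x ∈ Ω, u(x) = 0 or |u(x)| ≥ u₀, and v(x) = 0 or |v(x)| ≥ u₀. Then for every p ∈ [1, ∞): ∫_Ω |v(x) − u(x)|^p dx ≥ u₀^p · ‖χ_{{v ≠ 0}} − χ_{{u ≠ 0}}‖_{L¹(Ω)}, where χ_{{u ≠ 0}} and χ_{{v ≠ 0}} denote the characteristic functions of the sets {x : u(x) ≠ 0} and {x : v(x) ≠ 0}. (This applies in particular to consecutive iterates u_k, u_{k+1} of the proximal gradient method when 1/L > s₀, with u₀ = u₀(L⁻¹) the sparsity constant.) -/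
open MeasureTheory

/-- if `u, v` are measurable on `Ω ⊂ ℝⁿ` (finite measure) and each takes, a.e.,
either the value `0` or values of modulus `≥ u₀ > 0`, then for every `p ∈ [1, ∞)`,
`∫_Ω |v − u|^p dx ≥ u₀^p · μ({v ≠ 0} ∆ {u ≠ 0})`, the right-hand side being `u₀^p` times the
`L¹`-norm of the difference of the characteristic functions of `{u ≠ 0}` and `{v ≠ 0}`. -/
theorem consecutive_sparse_lower_bound (n : ℕ) (Ω : Set (EuclideanSpace ℝ (Fin n)))
    (hΩ : MeasurableSet Ω) (hfin : volume Ω < ⊤)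
    (u₀ : ℝ) (hu₀ : 0 < u₀)
    (u v : EuclideanSpace ℝ (Fin n) → ℝ) (hu : Measurable u) (hv : Measurable v)
    (hua : ∀ᵐ x ∂(volume.restrict Ω), u x = 0 ∨ u₀ ≤ |u x|)
    (hva : ∀ᵐ x ∂(volume.restrict Ω), v x = 0 ∨ u₀ ≤ |v x|)
    (p : ℝ) (hp : 1 ≤ p) :
    ENNReal.ofReal (u₀ ^ p) *
        (volume.restrict Ω) (symmDiff {x | v x ≠ 0} {x | u x ≠ 0}) ≤
      ∫⁻ x, ENNReal.ofReal (|v x - u x| ^ p) ∂(volume.restrict Ω) := by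
  set μ := volume.restrict Ω
  set S := symmDiff {x | v x ≠ 0} {x | u x ≠ 0} with hS
  have hSm : MeasurableSet S :=
    MeasurableSet.symmDiff (hv (measurableSet_singleton 0).compl)
      (hu (measurableSet_singleton 0).compl)
  have key : ∀ᵐ x ∂(μ.restrict S), ENNReal.ofReal (u₀ ^ p) ≤ ENNReal.ofReal (|v x - u x| ^ p) := by
    filter_upwards [ae_restrict_of_ae hua, ae_restrict_of_ae hva, ae_restrict_mem hSm]
      with x hx1 hx2 hxS
    have habs : u₀ ≤ |v x - u x| := by
      rcases hxS with ⟨hv1, hu1⟩ | ⟨hu1, hv1⟩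
      · simp only [Set.mem_setOf_eq, not_not] at hv1 hu1
        rcases hx2 with h | h
        · exact absurd h hv1
        · rwa [hu1, sub_zero]
      · simp only [Set.mem_setOf_eq, not_not] at hv1 hu1
        rcases hx1 with h | h
        · exact absurd h hu1
        · rw [hv1, zero_sub, abs_neg]; exact h
    exact ENNReal.ofReal_le_ofReal
      (Real.rpow_le_rpow hu₀.le habs (le_trans zero_le_one hp))
  calc ENNReal.ofReal (u₀ ^ p) * μ S = ∫⁻ _ in S, ENNReal.ofReal (u₀ ^ p) ∂μ := by
        rw [setLIntegral_const]
    _ ≤ ∫⁻ x in S, ENNReal.ofReal (|v x - u x| ^ p) ∂μ := lintegral_mono_ae key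
    _ ≤ ∫⁻ x, ENNReal.ofReal (|v x - u x| ^ p) ∂μ := setLIntegral_le_lintegral _ _
end

section
/- In the proximal gradient setting with L > L_f and j(u_1) < ∞, the iterates satisfy Σ_{k=1}^∞ ‖u_{k+1} − u_k‖²_{L²(Ω)} ≤ (2/(L − L_f))·(f(u_1) + j(u_1) − inf_{u}(f(u) + j(u))) < ∞; in particular ‖u_{k+1} − u_k‖_{L²(Ω)} → 0 as k → ∞, and u_{k+1} − u_k → 0 pointwise almost everywhere on Ω. -/
open MeasureTheory Filter

/-- The canonical map `ℝ ∪ {±∞} → [0, ∞]`, truncating negative values to `0`. -/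
noncomputable def erealToENNReal (x : EReal) : ENNReal :=
  if x = ⊤ then ⊤ else ENNReal.ofReal x.toReal

/-- The integral functional `j(w) := ∫ g(w(x)) dμ(x)` with values in `ℝ ∪ {±∞}`, defined as
the integral of the positive part of `g ∘ w` minus the integral of its negative part. -/
noncomputable def jfun {α : Type*} [MeasurableSpace α] (μ : Measure α)
    (g : ℝ → EReal) (w : α → ℝ) : EReal :=
  ((∫⁻ x, erealToENNReal (g (w x)) ∂μ : ENNReal) : EReal) -
    ((∫⁻ x, erealToENNReal (-(g (w x))) ∂μ : ENNReal) : EReal)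

/-!
The Lipschitz gradient gives the descent lemma `f y ≤ f x + ⟪∇f x, y - x⟫ + L_f/2 ‖y - x‖²`.
Comparing the minimizer `u_{k+1}` of the proximal gradient model with the competitor `u_k` then
yields the sufficient decrease `F(u_{k+1}) + (L - L_f)/2 ‖u_{k+1} - u_k‖² ≤ F(u_k)` for
`F = f + j`, so `F(u_k)` stays finite once `F(u_1)` is, and telescoping against `inf F > -∞`
bounds the partial sums. The summable squares of the `L²` norms force
`∑_k |u_{k+1}(x) - u_k(x)|² < ∞` almost everywhere, hence the pointwise convergence.
-/

open scoped ENNReal NNReal Topology InnerProductSpace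

theorem summable_and_tsum_le_of_add_le {a c : ℕ → ℝ} {b : ℝ} (hc : ∀ k, 0 ≤ c k)
    (ha : ∀ k, a (k + 1) + c k ≤ a k) (hb : ∀ k, b ≤ a k) :
    Summable c ∧ ∑' k, c k ≤ a 0 - b := by
  have hpartial : ∀ N, ∑ k ∈ Finset.range N, c k ≤ a 0 - b := fun N => calc
    ∑ k ∈ Finset.range N, c k ≤ ∑ k ∈ Finset.range N, (a k - a (k + 1)) :=
      Finset.sum_le_sum fun k _ => by linarith [ha k]
    _ = a 0 - a N := Finset.sum_range_sub' a N
    _ ≤ a 0 - b := by linarith [hb N]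
  exact ⟨summable_of_sum_range_le hc hpartial, Real.tsum_le_of_sum_range_le hc hpartial⟩

theorem tendsto_zero_of_summable_norm_rpow {F : Type*} [SeminormedAddCommGroup F] {a : ℕ → F}
    {q : ℝ} (hq : 0 < q) (h : Summable fun k => ‖a k‖ ^ q) : Tendsto a atTop (𝓝 0) := by
  rw [tendsto_zero_iff_norm_tendsto_zero]
  have := h.tendsto_atTop_zero.rpow_const (p := q⁻¹) (Or.inr (inv_nonneg.2 hq.le))
  simpa [← Real.rpow_mul (norm_nonneg _), hq.ne', Real.zero_rpow (inv_ne_zero hq.ne')] using this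

theorem MeasureTheory.Lp.ae_tendsto_zero_of_summable_norm_rpow {α F : Type*}
    [MeasurableSpace α] {μ : Measure α} [NormedAddCommGroup F] {p : ℝ≥0∞} (hp0 : p ≠ 0)
    (hp : p ≠ ∞) {v : ℕ → Lp F p μ} (hv : Summable fun k => ‖v k‖ ^ p.toReal) :
    ∀ᵐ x ∂μ, Tendsto (fun k => v k x) atTop (𝓝 0) := by
  have hq : 0 < p.toReal := ENNReal.toReal_pos hp0 hp
  have hnn : ∀ k, 0 ≤ ‖v k‖ := fun _ => ENNReal.toReal_nonneg
  have hnorm : ∀ k,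
      eLpNorm (fun x => ‖v k x‖ ^ p.toReal) 1 μ = ENNReal.ofReal (‖v k‖ ^ p.toReal) := by
    intro k
    rw [eLpNorm_norm_rpow _ hq, one_mul, ENNReal.ofReal_toReal hp,
      ← ENNReal.ofReal_rpow_of_nonneg (hnn k) hq.le, Lp.norm_def,
      ENNReal.ofReal_toReal (Lp.eLpNorm_ne_top _)]
  have htsum : ∑' k, eLpNorm (fun x => ‖v k x‖ ^ p.toReal) 1 μ ≠ ∞ := by
    rw [tsum_congr hnorm,
      ← ENNReal.ofReal_tsum_of_nonneg (fun k => Real.rpow_nonneg (hnn k) _) hv]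
    exact ENNReal.ofReal_ne_top
  have hmeas : ∀ k, AEStronglyMeasurable (fun x => ‖v k x‖ ^ p.toReal) μ := fun k =>
    ((Lp.aestronglyMeasurable (v k)).norm.aemeasurable.pow_const _).aestronglyMeasurable
  filter_upwards [summable_norm_of_tsum_eLpNorm_ne_top le_rfl hmeas htsum] with x hx
  exact tendsto_zero_of_summable_norm_rpow hq
    (hx.congr fun k => Real.norm_of_nonneg (Real.rpow_nonneg (norm_nonneg _) _))

section ProximalGradient

variable {E : Type*} [NormedAddCommGroup E] [InnerProductSpace ℝ E]

theorem le_add_inner_add_sq_of_lipschitzWith {f : E → ℝ} {f' : E → E} {K : ℝ≥0}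
    (hf : ∀ x, HasFDerivAt f (innerSL ℝ (f' x)) x) (hf' : LipschitzWith K f') (x y : E) :
    f y ≤ f x + ⟪f' x, y - x⟫_ℝ + K / 2 * ‖y - x‖ ^ 2 := by
  set d := y - x
  let φ : ℝ → ℝ := fun t => f (x + t • d) - t * ⟪f' x, d⟫_ℝ - K / 2 * t ^ 2 * ‖d‖ ^ 2
  let φ' : ℝ → ℝ := fun t => ⟪f' (x + t • d) - f' x, d⟫_ℝ - K * t * ‖d‖ ^ 2
  have hφ : ∀ t, HasDerivAt φ (φ' t) t := by
    intro t
    have hline : HasDerivAt (fun t : ℝ => x + t • d) d t := by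
      simpa using ((hasDerivAt_id t).smul_const d).const_add x
    have := (((hf _).comp_hasDerivAt t hline).sub ((hasDerivAt_id t).mul_const ⟪f' x, d⟫_ℝ)).sub
      (((hasDerivAt_pow 2 t).const_mul (K / 2 : ℝ)).mul_const (‖d‖ ^ 2))
    refine this.congr_deriv ?_
    simp only [φ', inner_sub_left, innerSL_apply_apply]
    ring
  have hφ'_nonpos : ∀ t, 0 ≤ t → φ' t ≤ 0 := by
    intro t ht
    refine sub_nonpos.2 ?_
    calc ⟪f' (x + t • d) - f' x, d⟫_ℝ ≤ ‖f' (x + t • d) - f' x‖ * ‖d‖ := real_inner_le_norm _ _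
      _ ≤ K * ‖t • d‖ * ‖d‖ := by
        gcongr
        simpa [dist_eq_norm] using hf'.dist_le_mul (x + t • d) x
      _ = K * t * ‖d‖ ^ 2 := by rw [norm_smul, Real.norm_of_nonneg ht]; ring
  have hanti : AntitoneOn φ (Set.Ici 0) :=
    antitoneOn_of_hasDerivWithinAt_nonpos (convex_Ici 0)
      (fun t _ => (hφ t).continuousAt.continuousWithinAt) (fun t _ => (hφ t).hasDerivWithinAt)
      (fun t ht => hφ'_nonpos t (interior_subset ht))
  have := hanti Set.self_mem_Ici (Set.mem_Ici.2 zero_le_one) zero_le_one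
  simp [φ, d] at this
  linarith

noncomputable def proxGradModel (f : E → ℝ) (f' : E → E) (j : E → EReal) (L : ℝ) (x w : E) :
    EReal :=
  ((f x + ⟪f' x, w - x⟫_ℝ + L / 2 * ‖w - x‖ ^ 2 : ℝ) : EReal) + j w

variable {f : E → ℝ} {f' : E → E} {j : E → EReal} {K : ℝ≥0} {L : ℝ}

theorem proxGradModel_sufficient_decrease (hf : ∀ x, HasFDerivAt f (innerSL ℝ (f' x)) x)
    (hf' : LipschitzWith K f') (hj : ∀ w, j w ≠ ⊥) {x y : E}
    (hmin : ∀ w, proxGradModel f f' j L x y ≤ proxGradModel f f' j L x w) (hx : j x ≠ ⊤) :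
    j y ≠ ⊤ ∧ f y + (j y).toReal + (L - K) / 2 * ‖y - x‖ ^ 2 ≤ f x + (j x).toReal := by
  have hxx : proxGradModel f f' j L x x = f x + j x := by simp [proxGradModel]
  have hxy := hxx ▸ hmin x
  rw [proxGradModel, ← EReal.coe_toReal hx (hj x), ← EReal.coe_add] at hxy
  have hy : j y ≠ ⊤ := by
    rintro hy
    rw [hy, EReal.coe_add_top, top_le_iff] at hxy
    exact EReal.coe_ne_top _ hxy
  rw [← EReal.coe_toReal hy (hj y), ← EReal.coe_add, EReal.coe_le_coe_iff] at hxy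
  exact ⟨hy, by linarith [le_add_inner_add_sq_of_lipschitzWith hf hf' x y]⟩

theorem proxGrad_summable_sq_norm_sub {u : ℕ → E}
    (hf : ∀ x, HasFDerivAt f (innerSL ℝ (f' x)) x) (hf' : LipschitzWith K f') (hL : (K : ℝ) < L)
    (hfb : ∃ m, ∀ w, m ≤ f w) (hjb : ∃ b : ℝ, ∀ w, (b : EReal) ≤ j w)
    (hu : ∀ k w, proxGradModel f f' j L (u k) (u (k + 1)) ≤ proxGradModel f f' j L (u k) w)
    (hu0 : j (u 0) ≠ ⊤) :
    Summable (fun k => ‖u (k + 1) - u k‖ ^ 2) ∧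
      ((∑' k, ‖u (k + 1) - u k‖ ^ 2 : ℝ) : EReal) ≤
        ((2 / (L - K) : ℝ) : EReal) * ((f (u 0) : EReal) + j (u 0) - ⨅ w, (f w : EReal) + j w) ∧
      ((2 / (L - K) : ℝ) : EReal) * ((f (u 0) : EReal) + j (u 0) - ⨅ w, (f w : EReal) + j w)
        < ⊤ := by
  obtain ⟨m, hm⟩ := hfb
  obtain ⟨b, hb⟩ := hjb
  have hj : ∀ w, j w ≠ ⊥ := fun w => ne_bot_of_le_ne_bot (EReal.coe_ne_bot b) (hb w)
  have hfin : ∀ k, j (u k) ≠ ⊤ := by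
    intro k
    induction k with
    | zero => exact hu0
    | succ k ih => exact (proxGradModel_sufficient_decrease hf hf' hj (hu k) ih).1
  set S : ℕ → ℝ := fun k => f (u k) + (j (u k)).toReal
  have hS : ∀ k, (f (u k) : EReal) + j (u k) = S k := fun k => by
    rw [EReal.coe_add, EReal.coe_toReal (hfin k) (hj (u k))]
  set I := ⨅ w, (f w : EReal) + j w
  have hI_le : ∀ k, I ≤ S k := fun k => hS k ▸ iInf_le _ (u k)
  have hle_I : ((m + b : ℝ) : EReal) ≤ I :=
    le_iInf fun w => EReal.coe_add m b ▸ add_le_add (EReal.coe_le_coe_iff.2 (hm w)) (hb w)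
  obtain ⟨r, hr⟩ : ∃ r : ℝ, (r : EReal) = I :=
    ⟨I.toReal, EReal.coe_toReal (ne_top_of_le_ne_top (EReal.coe_ne_top _) (hI_le 0))
      (ne_bot_of_le_ne_bot (EReal.coe_ne_bot _) hle_I)⟩
  have hpos : 0 < 2 / (L - K) := div_pos two_pos (sub_pos.2 hL)
  obtain ⟨hsum, htsum⟩ := summable_and_tsum_le_of_add_le (a := fun k => 2 / (L - K) * S k)
    (b := 2 / (L - K) * r) (fun k => sq_nonneg ‖u (k + 1) - u k‖)
    (fun k => by
      have hone : 2 / (L - K) * ((L - K) / 2) = 1 := by field_simp [(sub_pos.2 hL).ne']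
      calc 2 / (L - K) * S (k + 1) + ‖u (k + 1) - u k‖ ^ 2
          = 2 / (L - K) * (S (k + 1) + (L - K) / 2 * ‖u (k + 1) - u k‖ ^ 2) := by
            linear_combination ‖u (k + 1) - u k‖ ^ 2 * hone.symm
        _ ≤ 2 / (L - K) * S k := mul_le_mul_of_nonneg_left
            (proxGradModel_sufficient_decrease hf hf' hj (hu k) (hfin k)).2 hpos.le)
    (fun k => mul_le_mul_of_nonneg_left (EReal.coe_le_coe_iff.1 (hr ▸ hI_le k)) hpos.le)
  rw [hS 0, ← hr, ← EReal.coe_sub, ← EReal.coe_mul, EReal.coe_le_coe_iff]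
  exact ⟨hsum, by linarith [mul_sub (2 / (L - K)) (S 0) r], EReal.coe_lt_top _⟩

end ProximalGradient

theorem erealToENNReal_le_ofReal {z : EReal} {r : ℝ} (h : z ≤ r) :
    erealToENNReal z ≤ ENNReal.ofReal r := by
  induction z using EReal.rec with
  | bot => simp [erealToENNReal]
  | coe z => simpa [erealToENNReal] using ENNReal.ofReal_le_ofReal (EReal.coe_le_coe_iff.1 h)
  | top => simp at h

theorem coe_le_jfun {α : Type*} [MeasurableSpace α] {μ : Measure α} [IsFiniteMeasure μ]
    {g : ℝ → EReal} {c : ℝ} (hg : ∀ x, (c : EReal) ≤ g x) (w : α → ℝ) :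
    ((min c 0 * μ.real Set.univ : ℝ) : EReal) ≤ jfun μ g w := by
  have hneg : ∀ x, erealToENNReal (-g (w x)) ≤ ENNReal.ofReal (-c) := fun x =>
    erealToENNReal_le_ofReal (by rw [EReal.coe_neg]; exact EReal.neg_le_neg_iff.2 (hg _))
  have hlint : ∫⁻ x, erealToENNReal (-g (w x)) ∂μ ≤ ENNReal.ofReal (-c) * μ Set.univ :=
    (lintegral_mono hneg).trans_eq (lintegral_const _)
  have hbound : ((min c 0 * μ.real Set.univ : ℝ) : EReal) =
      -(ENNReal.ofReal (-c) * μ Set.univ : ℝ≥0∞) := by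
    rw [← EReal.coe_ennreal_toReal (by finiteness), ← EReal.coe_neg, ENNReal.toReal_mul,
      ENNReal.toReal_ofReal', ← measureReal_def, ← neg_mul, ← neg_zero, max_neg_neg, neg_neg,
      neg_zero]
  rw [hbound, jfun, ← zero_sub]
  exact EReal.sub_le_sub (EReal.coe_ennreal_nonneg _)
    (EReal.coe_ennreal_le_coe_ennreal_iff.2 hlint)

theorem prox_grad_square_summable_general (n : ℕ) (Ω : Set (EuclideanSpace ℝ (Fin n)))
    (hfin : volume Ω < ⊤)
    (g : ℝ → EReal)
    (hgbdd : ∃ c : ℝ, ∀ x : ℝ, (c : EReal) ≤ g x)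
    (f : Lp ℝ 2 (volume.restrict Ω) → ℝ)
    (hfbdd : ∃ m : ℝ, ∀ w, m ≤ f w)
    (gradf : Lp ℝ 2 (volume.restrict Ω) → Lp ℝ 2 (volume.restrict Ω))
    (hderiv : ∀ w, HasFDerivAt f ((innerSL ℝ) (gradf w)) w)
    (Lf : NNReal) (hlip : LipschitzWith Lf gradf)
    (L : ℝ) (hL : (Lf : ℝ) < L)
    (u : ℕ → Lp ℝ 2 (volume.restrict Ω))
    (hiter : ∀ k : ℕ, ∀ w : Lp ℝ 2 (volume.restrict Ω),
      ((f (u k) + inner ℝ (gradf (u k)) (u (k+1) - u k) + L / 2 * ‖u (k+1) - u k‖ ^ 2 : ℝ) : EReal)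
          + jfun (volume.restrict Ω) g (u (k+1)) ≤
        ((f (u k) + inner ℝ (gradf (u k)) (w - u k) + L / 2 * ‖w - u k‖ ^ 2 : ℝ) : EReal)
          + jfun (volume.restrict Ω) g w)
    (hj1 : jfun (volume.restrict Ω) g (u 1) ≠ ⊤) :
    (Summable fun k : ℕ => ‖u (k + 2) - u (k + 1)‖ ^ 2)
    ∧ (((∑' k : ℕ, ‖u (k + 2) - u (k + 1)‖ ^ 2 : ℝ) : EReal) ≤
        ((2 / (L - Lf) : ℝ) : EReal) *
          ((((f (u 1) : ℝ) : EReal) + jfun (volume.restrict Ω) g (u 1)) -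
            ⨅ w : Lp ℝ 2 (volume.restrict Ω), (((f w : ℝ) : EReal) + jfun (volume.restrict Ω) g w)))
    ∧ (((2 / (L - Lf) : ℝ) : EReal) *
          ((((f (u 1) : ℝ) : EReal) + jfun (volume.restrict Ω) g (u 1)) -
            ⨅ w : Lp ℝ 2 (volume.restrict Ω), (((f w : ℝ) : EReal) + jfun (volume.restrict Ω) g w))
        < ⊤)
    ∧ Tendsto (fun k : ℕ => ‖u (k + 1) - u k‖) atTop (nhds 0)
    ∧ (∀ᵐ x ∂(volume.restrict Ω),
        Tendsto (fun k : ℕ => (u (k + 1) : EuclideanSpace ℝ (Fin n) → ℝ) x -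
          (u k : EuclideanSpace ℝ (Fin n) → ℝ) x) atTop (nhds 0)) := by
  obtain ⟨c, hc⟩ := hgbdd
  have : IsFiniteMeasure (volume.restrict Ω) := isFiniteMeasure_restrict.2 hfin.ne
  obtain ⟨hsum, hle, hlt⟩ := proxGrad_summable_sq_norm_sub (u := fun k => u (k + 1))
    (j := fun w : Lp ℝ 2 (volume.restrict Ω) => jfun (volume.restrict Ω) g w)
    hderiv hlip hL hfbdd ⟨_, fun w => coe_le_jfun hc w⟩ (fun k => hiter (k + 1)) hj1
  have hsum' : Summable fun k => ‖u (k + 1) - u k‖ ^ (2 : ℝ) := by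
    simpa only [Real.rpow_two] using
      (summable_nat_add_iff (f := fun k => ‖u (k + 1) - u k‖ ^ 2) 1).1 hsum
  refine ⟨hsum, hle, hlt, tendsto_zero_iff_norm_tendsto_zero.1
    (tendsto_zero_of_summable_norm_rpow two_pos hsum'), ?_⟩
  filter_upwards [Lp.ae_tendsto_zero_of_summable_norm_rpow two_ne_zero ENNReal.ofNat_ne_top
      (by simpa using hsum'), ae_all_iff.2 fun k => Lp.coeFn_sub (u (k + 1)) (u k)] with x hx hsub
  simpa only [hsub, Pi.sub_apply] using hx

/-- in the proximal gradient setting with `L > L_f` and `j(u_1) < ∞`, the sum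
`Σ_{k=1}^∞ ‖u_{k+1} − u_k‖²` is finite and bounded by
`(2/(L − L_f))·(f(u_1) + j(u_1) − inf_u (f(u) + j(u))) < ∞`; in particular
`‖u_{k+1} − u_k‖ → 0` and `u_{k+1} − u_k → 0` pointwise almost everywhere on `Ω`. -/
theorem prox_grad_square_summable (n : ℕ) (Ω : Set (EuclideanSpace ℝ (Fin n)))
    (hΩ : MeasurableSet Ω) (hfin : volume Ω < ⊤)
    (g : ℝ → EReal)
    (hgproper : ∃ x : ℝ, g x ≠ ⊤)
    (hgbdd : ∃ c : ℝ, ∀ x : ℝ, (c : EReal) ≤ g x)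
    (hglsc : LowerSemicontinuous g)
    (f : Lp ℝ 2 (volume.restrict Ω) → ℝ)
    (hfbdd : ∃ m : ℝ, ∀ w, m ≤ f w)
    (gradf : Lp ℝ 2 (volume.restrict Ω) → Lp ℝ 2 (volume.restrict Ω))
    (hderiv : ∀ w, HasFDerivAt f ((innerSL ℝ) (gradf w)) w)
    (Lf : NNReal) (hlip : LipschitzWith Lf gradf)
    (L : ℝ) (hL : (Lf : ℝ) < L)
    (u : ℕ → Lp ℝ 2 (volume.restrict Ω))
    (hiter : ∀ k : ℕ, ∀ w : Lp ℝ 2 (volume.restrict Ω),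
      ((f (u k) + inner ℝ (gradf (u k)) (u (k+1) - u k) + L / 2 * ‖u (k+1) - u k‖ ^ 2 : ℝ) : EReal)
          + jfun (volume.restrict Ω) g (u (k+1)) ≤
        ((f (u k) + inner ℝ (gradf (u k)) (w - u k) + L / 2 * ‖w - u k‖ ^ 2 : ℝ) : EReal)
          + jfun (volume.restrict Ω) g w)
    (hj1 : jfun (volume.restrict Ω) g (u 1) ≠ ⊤) :
    (Summable fun k : ℕ => ‖u (k + 2) - u (k + 1)‖ ^ 2)
    ∧ (((∑' k : ℕ, ‖u (k + 2) - u (k + 1)‖ ^ 2 : ℝ) : EReal) ≤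
        ((2 / (L - Lf) : ℝ) : EReal) *
          ((((f (u 1) : ℝ) : EReal) + jfun (volume.restrict Ω) g (u 1)) -
            ⨅ w : Lp ℝ 2 (volume.restrict Ω), (((f w : ℝ) : EReal) + jfun (volume.restrict Ω) g w)))
    ∧ (((2 / (L - Lf) : ℝ) : EReal) *
          ((((f (u 1) : ℝ) : EReal) + jfun (volume.restrict Ω) g (u 1)) -
            ⨅ w : Lp ℝ 2 (volume.restrict Ω), (((f w : ℝ) : EReal) + jfun (volume.restrict Ω) g w))
        < ⊤)
    ∧ Tendsto (fun k : ℕ => ‖u (k + 1) - u k‖) atTop (nhds 0)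
    ∧ (∀ᵐ x ∂(volume.restrict Ω),
        Tendsto (fun k : ℕ => (u (k + 1) : EuclideanSpace ℝ (Fin n) → ℝ) x -
          (u k : EuclideanSpace ℝ (Fin n) → ℝ) x) atTop (nhds 0)) :=
  prox_grad_square_summable_general n Ω hfin g hgbdd f hfbdd gradf hderiv Lf hlip L hL u hiter hj1
end

section
/- Let Ω ⊂ ℝⁿ be Lebesgue measurable with finite measure, (u_k) ⊂ L²(Ω) a sequence with Σ_{k=1}^∞ ‖u_{k+1} − u_k‖²_{L²(Ω)} < ∞, and let u₀ > 0 be such that for every k and almost every x ∈ Ω, u_k(x) = 0 or |u_k(x)| ≥ u₀. Then the characteristic functions χ_k of the sets I_k := {x ∈ Ω : u_k(x) ≠ 0} form a Cauchy sequence in L¹(Ω) and converge in L¹(Ω) and pointwise almost everywhere to a characteristic function χ of some measurable subset of Ω. -/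
/-!
Where the supports `I_k`, `I_{k+1}` differ, one of `u_k`, `u_{k+1}` vanishes and the other has
modulus `≥ u₀`, so `|u_{k+1} - u_k| ≥ u₀` there; by Chebyshev's inequality the symmetric
differences `D_k := I_{k+1} ∆ I_k` satisfy `|D_k| ≤ ‖u_{k+1} - u_k‖² / u₀²`, hence `∑ |D_k| < ∞`.
Off the tail `⋃_{j ≥ N} D_j`, whose measure tends to `0`, membership in `I_k` no longer changes
for `k ≥ N`. So that tail contains every `I_m ∆ I_k` with `m, k ≥ N` as well as `I_N ∆ A` for
`A := liminf I_k`, and by Borel–Cantelli almost every point lies outside some tail.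
-/

open MeasureTheory Filter

/-- The characteristic function of the set `{x | w x ≠ 0}`. -/
noncomputable def chiSupp {α : Type*} (w : α → ℝ) : α → ℝ :=
  Set.indicator {x | w x ≠ 0} (fun _ => (1 : ℝ))

open Set Function
open scoped symmDiff ENNReal Topology

section SymmDiffTail

variable {X : Type*} {s : ℕ → Set X} {x : X} {N : ℕ}

theorem mem_iff_mem_of_notMem_iUnion_symmDiff_succ (hx : x ∉ ⋃ j ≥ N, s (j + 1) ∆ s j) :
    ∀ m ≥ N, (x ∈ s m ↔ x ∈ s N) := by
  simp only [mem_iUnion, mem_symmDiff, not_exists] at hx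
  intro m hm
  induction m, hm using Nat.le_induction with
  | base => rfl
  | succ m hm ih => have := hx m hm; tauto

theorem mem_liminf_iff_of_notMem_iUnion_symmDiff_succ (hx : x ∉ ⋃ j ≥ N, s (j + 1) ∆ s j) :
    x ∈ liminf s atTop ↔ x ∈ s N := by
  rw [mem_liminf_iff_eventually_mem, eventually_congr (eventually_atTop.2
    ⟨N, mem_iff_mem_of_notMem_iUnion_symmDiff_succ hx⟩), eventually_const]

theorem symmDiff_subset_iUnion_symmDiff_succ {m k : ℕ} (hm : N ≤ m) (hk : N ≤ k) :
    s m ∆ s k ⊆ ⋃ j ≥ N, s (j + 1) ∆ s j := by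
  intro x hx
  by_contra h
  have hm := mem_iff_mem_of_notMem_iUnion_symmDiff_succ h m hm
  have hk := mem_iff_mem_of_notMem_iUnion_symmDiff_succ h k hk
  rw [mem_symmDiff] at hx
  tauto

theorem symmDiff_liminf_subset_iUnion_symmDiff_succ (N : ℕ) :
    s N ∆ liminf s atTop ⊆ ⋃ j ≥ N, s (j + 1) ∆ s j := by
  intro x hx
  by_contra h
  have := mem_liminf_iff_of_notMem_iUnion_symmDiff_succ h
  rw [mem_symmDiff] at hx
  tauto

end SymmDiffTail

section SummableSymmDiff

variable {X : Type*} [MeasurableSpace X] {μ : Measure X} {s : ℕ → Set X}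

theorem tendsto_measure_iUnion_symmDiff_succ (h : ∑' k, μ (s (k + 1) ∆ s k) ≠ ∞) :
    Tendsto (fun N ↦ μ (⋃ j ≥ N, s (j + 1) ∆ s j)) atTop (𝓝 0) := by
  refine tendsto_of_tendsto_of_tendsto_of_le_of_le tendsto_const_nhds
    (ENNReal.tendsto_sum_nat_add _ h) (fun _ ↦ zero_le) fun N ↦ ?_
  rw [iUnion_ge_eq_iUnion_nat_add]
  exact measure_iUnion_le _

theorem exists_forall_measure_symmDiff_lt (h : ∑' k, μ (s (k + 1) ∆ s k) ≠ ∞)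
    {ε : ℝ≥0∞} (hε : 0 < ε) : ∃ N, ∀ m ≥ N, ∀ k ≥ N, μ (s m ∆ s k) < ε := by
  obtain ⟨N, hN⟩ := ((tendsto_measure_iUnion_symmDiff_succ h).eventually
    (gt_mem_nhds hε)).exists_forall_of_atTop
  exact ⟨N, fun m hm k hk ↦
    (measure_mono (symmDiff_subset_iUnion_symmDiff_succ hm hk)).trans_lt (hN N le_rfl)⟩

theorem tendsto_measure_symmDiff_liminf (h : ∑' k, μ (s (k + 1) ∆ s k) ≠ ∞) :
    Tendsto (fun k ↦ μ (s k ∆ liminf s atTop)) atTop (𝓝 0) :=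
  tendsto_of_tendsto_of_tendsto_of_le_of_le tendsto_const_nhds
    (tendsto_measure_iUnion_symmDiff_succ h) (fun _ ↦ zero_le)
    fun N ↦ measure_mono (symmDiff_liminf_subset_iUnion_symmDiff_succ N)

theorem ae_tendsto_indicator_liminf (h : ∑' k, μ (s (k + 1) ∆ s k) ≠ ∞) :
    ∀ᵐ x ∂μ, Tendsto (fun k ↦ (s k).indicator (fun _ ↦ (1 : ℝ)) x) atTop
      (𝓝 ((liminf s atTop).indicator (fun _ ↦ (1 : ℝ)) x)) := by
  filter_upwards [ae_eventually_notMem h] with x hx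
  obtain ⟨N, hN⟩ := eventually_atTop.1 hx
  have hxN : x ∉ ⋃ j ≥ N, s (j + 1) ∆ s j := by simpa using hN
  rw [tendsto_indicator_const_apply_iff_eventually]
  filter_upwards [eventually_ge_atTop N] with m hm
  rw [mem_iff_mem_of_notMem_iUnion_symmDiff_succ hxN m hm,
    mem_liminf_iff_of_notMem_iUnion_symmDiff_succ hxN]

end SummableSymmDiff

theorem lintegral_ofReal_abs_indicator_sub_indicator {X : Type*} [MeasurableSpace X]
    {μ : Measure X} {s t : Set X} (hs : MeasurableSet s) (ht : MeasurableSet t) :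
    ∫⁻ x, ENNReal.ofReal |s.indicator (fun _ ↦ (1 : ℝ)) x - t.indicator (fun _ ↦ 1) x| ∂μ =
      μ (s ∆ t) := by
  rw [← lintegral_indicator_one (hs.symmDiff ht)]
  congr 1 with x
  by_cases hxs : x ∈ s <;> by_cases hxt : x ∈ t <;> simp [hxs, hxt, mem_symmDiff]

theorem le_abs_sub_of_mem_symmDiff_support {α : Type*} {f g : α → ℝ} {u₀ : ℝ} {x : α}
    (hf : f x = 0 ∨ u₀ ≤ |f x|) (hg : g x = 0 ∨ u₀ ≤ |g x|)
    (hx : x ∈ support f ∆ support g) : u₀ ≤ |f x - g x| := by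
  rcases mem_symmDiff.1 hx with ⟨hfx, hgx⟩ | ⟨hgx, hfx⟩
  · rw [notMem_support.1 hgx, sub_zero]
    exact hf.resolve_left hfx
  · rw [notMem_support.1 hfx, zero_sub, abs_neg]
    exact hg.resolve_left hgx

section SparseL2

variable {α : Type*} [MeasurableSpace α] {μ : Measure α} {u₀ : ℝ}

theorem measure_symmDiff_support_le (hu₀ : 0 < u₀) {v w : Lp ℝ 2 μ}
    (hv : ∀ᵐ x ∂μ, v x = 0 ∨ u₀ ≤ |v x|) (hw : ∀ᵐ x ∂μ, w x = 0 ∨ u₀ ≤ |w x|) :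
    μ (support v ∆ support w) ≤ (ENNReal.ofReal u₀)⁻¹ ^ 2 * ‖v - w‖ₑ ^ 2 := by
  calc μ (support v ∆ support w) ≤ μ {x | ENNReal.ofReal u₀ ≤ ‖(v - w : Lp ℝ 2 μ) x‖ₑ} := by
        refine measure_mono_ae ?_
        filter_upwards [hv, hw, Lp.coeFn_sub v w] with x hvx hwx hsub hx
        change ENNReal.ofReal u₀ ≤ ‖(v - w : Lp ℝ 2 μ) x‖ₑ
        rw [hsub, Pi.sub_apply, Real.enorm_eq_ofReal_abs]
        exact ENNReal.ofReal_le_ofReal (le_abs_sub_of_mem_symmDiff_support hvx hwx hx)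
    _ ≤ (ENNReal.ofReal u₀)⁻¹ ^ (2 : ℝ≥0∞).toReal * eLpNorm (v - w) 2 μ ^ (2 : ℝ≥0∞).toReal :=
        meas_ge_le_mul_pow_eLpNorm_enorm μ two_ne_zero ENNReal.ofNat_ne_top
          (Lp.aestronglyMeasurable _) (by simpa using hu₀) (by simp)
    _ = (ENNReal.ofReal u₀)⁻¹ ^ 2 * ‖v - w‖ₑ ^ 2 := by
        simp [Lp.enorm_def]

theorem tsum_measure_symmDiff_support_ne_top (hu₀ : 0 < u₀) {u : ℕ → Lp ℝ 2 μ}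
    (hsum : Summable fun k ↦ ‖u (k + 1) - u k‖ ^ 2)
    (hsparse : ∀ k, ∀ᵐ x ∂μ, u k x = 0 ∨ u₀ ≤ |u k x|) :
    ∑' k, μ (support (u (k + 1)) ∆ support (u k)) ≠ ∞ := by
  have hC : (ENNReal.ofReal u₀)⁻¹ ^ 2 ≠ ∞ := by simpa using hu₀
  have hsum_enorm : ∑' k, ‖u (k + 1) - u k‖ₑ ^ 2 ≠ ∞ := by
    simp_rw [← ofReal_norm, ← ENNReal.ofReal_pow (norm_nonneg _),
      ← ENNReal.ofReal_tsum_of_nonneg (fun _ ↦ by positivity) hsum]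
    exact ENNReal.ofReal_ne_top
  refine ne_top_of_le_ne_top (ENNReal.mul_ne_top hC hsum_enorm) ?_
  rw [← ENNReal.tsum_mul_left]
  exact ENNReal.tsum_le_tsum fun k ↦ measure_symmDiff_support_le hu₀ (hsparse _) (hsparse k)

end SparseL2

theorem chi_converges_general (n : ℕ) (Ω : Set (EuclideanSpace ℝ (Fin n)))
    (u : ℕ → Lp ℝ 2 (volume.restrict Ω))
    (hsum : Summable fun k : ℕ => ‖u (k + 1) - u k‖ ^ 2)
    (u₀ : ℝ) (hu₀ : 0 < u₀)
    (hsparse : ∀ k : ℕ, ∀ᵐ x ∂(volume.restrict Ω),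
      (u k : EuclideanSpace ℝ (Fin n) → ℝ) x = 0 ∨
        u₀ ≤ |(u k : EuclideanSpace ℝ (Fin n) → ℝ) x|) :
    (∀ ε : ℝ, 0 < ε → ∃ N : ℕ, ∀ m ≥ N, ∀ k ≥ N,
      (∫⁻ x, ENNReal.ofReal |chiSupp (u m : EuclideanSpace ℝ (Fin n) → ℝ) x -
        chiSupp (u k : EuclideanSpace ℝ (Fin n) → ℝ) x| ∂(volume.restrict Ω))
        < ENNReal.ofReal ε)
    ∧ ∃ A : Set (EuclideanSpace ℝ (Fin n)), MeasurableSet A ∧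
      Tendsto (fun k : ℕ => ∫⁻ x, ENNReal.ofReal
          |chiSupp (u k : EuclideanSpace ℝ (Fin n) → ℝ) x -
            A.indicator (fun _ => (1 : ℝ)) x| ∂(volume.restrict Ω)) atTop (nhds 0)
      ∧ (∀ᵐ x ∂(volume.restrict Ω),
          Tendsto (fun k : ℕ => chiSupp (u k : EuclideanSpace ℝ (Fin n) → ℝ) x) atTop
            (nhds (A.indicator (fun _ => (1 : ℝ)) x))) := by
  have hs : ∀ k, MeasurableSet {x | (u k : EuclideanSpace ℝ (Fin n) → ℝ) x ≠ 0} := fun k ↦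
    measurableSet_support (Lp.stronglyMeasurable (u k)).measurable
  have hΔ := tsum_measure_symmDiff_support_ne_top hu₀ hsum hsparse
  have hA := MeasurableSet.measurableSet_liminf hs
  refine ⟨fun ε hε ↦ ?_, _, hA, ?_, ?_⟩ <;>
    simp only [chiSupp, lintegral_ofReal_abs_indicator_sub_indicator, hs, hA]
  · exact exists_forall_measure_symmDiff_lt hΔ (ENNReal.ofReal_pos.2 hε)
  · exact tendsto_measure_symmDiff_liminf hΔ
  · exact ae_tendsto_indicator_liminf hΔ

/-- if `(u_k) ⊂ L²(Ω)` (Ω ⊂ ℝⁿ of finite measure) satisfies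
`Σ ‖u_{k+1} − u_k‖²_{L²} < ∞` and each `u_k` is, a.e., either `0` or of modulus `≥ u₀ > 0`,
then the characteristic functions `χ_k` of `{u_k ≠ 0}` form a Cauchy sequence in `L¹(Ω)` and
converge in `L¹(Ω)` and pointwise a.e. to the characteristic function `χ` of a measurable set. -/
theorem chi_converges (n : ℕ) (Ω : Set (EuclideanSpace ℝ (Fin n)))
    (hΩ : MeasurableSet Ω) (hfin : volume Ω < ⊤)
    (u : ℕ → Lp ℝ 2 (volume.restrict Ω))
    (hsum : Summable fun k : ℕ => ‖u (k + 1) - u k‖ ^ 2)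
    (u₀ : ℝ) (hu₀ : 0 < u₀)
    (hsparse : ∀ k : ℕ, ∀ᵐ x ∂(volume.restrict Ω),
      (u k : EuclideanSpace ℝ (Fin n) → ℝ) x = 0 ∨
        u₀ ≤ |(u k : EuclideanSpace ℝ (Fin n) → ℝ) x|) :
    (∀ ε : ℝ, 0 < ε → ∃ N : ℕ, ∀ m ≥ N, ∀ k ≥ N,
      (∫⁻ x, ENNReal.ofReal |chiSupp (u m : EuclideanSpace ℝ (Fin n) → ℝ) x -
        chiSupp (u k : EuclideanSpace ℝ (Fin n) → ℝ) x| ∂(volume.restrict Ω))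
        < ENNReal.ofReal ε)
    ∧ ∃ A : Set (EuclideanSpace ℝ (Fin n)), MeasurableSet A ∧
      Tendsto (fun k : ℕ => ∫⁻ x, ENNReal.ofReal
          |chiSupp (u k : EuclideanSpace ℝ (Fin n) → ℝ) x -
            A.indicator (fun _ => (1 : ℝ)) x| ∂(volume.restrict Ω)) atTop (nhds 0)
      ∧ (∀ᵐ x ∂(volume.restrict Ω),
          Tendsto (fun k : ℕ => chiSupp (u k : EuclideanSpace ℝ (Fin n) → ℝ) x) atTop
            (nhds (A.indicator (fun _ => (1 : ℝ)) x))) :=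
  chi_converges_general n Ω u hsum u₀ hu₀ hsparse
end

section
/- Let Ω ⊂ ℝⁿ be Lebesgue measurable with finite measure, (u_k) ⊂ L²(Ω), and let χ_k denote the characteristic function of {x : u_k(x) ≠ 0}. Assume χ_k → χ in L¹(Ω) for some characteristic function χ, and assume a subsequence u_{k_n} converges weakly in L²(Ω) to u*. Then (1 − χ)·u* = 0 almost everywhere in Ω. -/
open MeasureTheory Filter Topology

/-! Test the weak convergence against `w = 1_{Aᶜ} u*`. As `u_k` vanishes off `S_k = {u_k ≠ 0}`,
`|⟪u_k, w⟫| = |⟪u_k, 1_{S_k \ A} u*⟫| ≤ ‖u_k‖ ‖1_{S_k \ A} u*‖`. The norms `‖u_k‖` are bounded by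
Banach–Steinhaus, and the second factor tends to zero by absolute continuity of the integral,
because `μ(S_k \ A) ≤ μ(S_k ∆ A) = ‖χ_k - χ‖₁ → 0`. Hence `‖w‖² = ⟪u*, w⟫ = lim ⟪u_k, w⟫ = 0`. -/

theorem abs_indicator_one_sub_indicator_one {α : Type*} (s t : Set α) (x : α) :
    |s.indicator (fun _ => (1 : ℝ)) x - t.indicator (fun _ => (1 : ℝ)) x|
      = (symmDiff s t).indicator (fun _ => (1 : ℝ)) x := by
  by_cases hs : x ∈ s <;> by_cases ht : x ∈ t <;> simp [hs, ht, Set.mem_symmDiff]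

theorem exists_norm_le_of_weak_tendsto {E : Type*} [NormedAddCommGroup E]
    [InnerProductSpace ℝ E] [CompleteSpace E] {u : ℕ → E} {x : E}
    (hweak : ∀ w, Tendsto (fun k => inner ℝ (u k) w) atTop (𝓝 (inner ℝ x w))) :
    ∃ C, ∀ k, ‖u k‖ ≤ C := by
  obtain ⟨C, hC⟩ := banach_steinhaus (g := fun k => innerSL ℝ (u k)) fun w => by
    obtain ⟨C, hC⟩ := (hweak w).norm.bddAbove_range
    exact ⟨C, fun k => hC (Set.mem_range_self k)⟩
  exact ⟨C, fun k => by simpa [innerSL_apply_norm] using hC k⟩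

namespace MeasureTheory

variable {α : Type*} [MeasurableSpace α] {μ : Measure α}

theorem lintegral_ofReal_abs_indicator_one_sub_indicator_one {s t : Set α}
    (hs : MeasurableSet s) (ht : MeasurableSet t) :
    ∫⁻ x, ENNReal.ofReal |s.indicator (fun _ => (1 : ℝ)) x - t.indicator (fun _ => (1 : ℝ)) x| ∂μ
      = μ (symmDiff s t) := by
  rw [← lintegral_indicator_one (hs.symmDiff ht)]
  refine lintegral_congr fun x => ?_
  rw [abs_indicator_one_sub_indicator_one]
  by_cases hx : x ∈ symmDiff s t <;> simp [hx]

theorem MemLp.tendsto_eLpNorm_indicator {E : Type*} [NormedAddCommGroup E] {p : ENNReal}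
    (hp_one : 1 ≤ p) (hp_top : p ≠ ⊤) {f : α → E} (hf : MemLp f p μ)
    {ι : Type*} {l : Filter ι} {s : ι → Set α} (hs : ∀ i, MeasurableSet (s i))
    (hμs : Tendsto (μ ∘ s) l (𝓝 0)) :
    Tendsto (fun i => eLpNorm ((s i).indicator f) p μ) l (𝓝 0) := by
  refine ENNReal.tendsto_nhds_zero.2 fun ε hε => ?_
  rcases eq_or_ne ε ⊤ with rfl | hε_top
  · exact Eventually.of_forall fun _ => le_top
  obtain ⟨δ, hδ, hsmall⟩ :=
    hf.eLpNorm_indicator_le hp_one hp_top (ENNReal.toReal_pos hε.ne' hε_top)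
  filter_upwards [ENNReal.tendsto_nhds_zero.1 hμs _ (ENNReal.ofReal_pos.2 hδ)] with i hi
  exact (hsmall _ (hs i) hi).trans (ENNReal.ofReal_toReal hε_top).le

section indicatorLp

variable {E : Type*} [NormedAddCommGroup E] {p : ENNReal}

noncomputable def indicatorLp (s : Set α) (hs : MeasurableSet s) (f : Lp E p μ) : Lp E p μ :=
  ((Lp.memLp f).indicator hs).toLp (s.indicator f)

theorem coeFn_indicatorLp {s : Set α} (hs : MeasurableSet s) (f : Lp E p μ) :
    indicatorLp s hs f =ᵐ[μ] s.indicator f :=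
  MemLp.coeFn_toLp _

theorem tendsto_norm_indicatorLp [Fact (1 ≤ p)] (hp_top : p ≠ ⊤) (f : Lp E p μ)
    {ι : Type*} {l : Filter ι} {s : ι → Set α} (hs : ∀ i, MeasurableSet (s i))
    (hμs : Tendsto (μ ∘ s) l (𝓝 0)) :
    Tendsto (fun i => ‖indicatorLp (s i) (hs i) f‖) l (𝓝 0) := by
  simp only [indicatorLp, Lp.norm_toLp]
  exact (ENNReal.tendsto_toReal ENNReal.zero_ne_top).comp
    ((Lp.memLp f).tendsto_eLpNorm_indicator Fact.out hp_top hs hμs)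

end indicatorLp

namespace L2

theorem inner_indicatorLp_self {s : Set α} (hs : MeasurableSet s) (f : Lp ℝ 2 μ) :
    inner ℝ f (indicatorLp s hs f) = inner ℝ (indicatorLp s hs f) (indicatorLp s hs f) := by
  simp only [L2.inner_def]
  refine integral_congr_ae ?_
  filter_upwards [coeFn_indicatorLp hs f] with x hx
  by_cases h : x ∈ s <;> simp [hx, h]

theorem inner_indicatorLp_of_ae_eq_zero_off {s t : Set α} (hs : MeasurableSet s)
    (ht : MeasurableSet t) {u : Lp ℝ 2 μ} (hu : ∀ᵐ x ∂μ, x ∉ t → u x = 0) (f : Lp ℝ 2 μ) :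
    inner ℝ u (indicatorLp s hs f) = inner ℝ u (indicatorLp (t ∩ s) (ht.inter hs) f) := by
  simp only [L2.inner_def]
  refine integral_congr_ae ?_
  filter_upwards [hu, coeFn_indicatorLp hs f, coeFn_indicatorLp (ht.inter hs) f]
    with x hux hs_x hts_x
  by_cases h : x ∈ t
  · rw [hs_x, hts_x, ← Set.indicator_indicator, Set.indicator_of_mem h]
  · simp [hux h]

theorem ae_eq_zero_off_of_weak_tendsto {u : ℕ → Lp ℝ 2 μ} {S : ℕ → Set α}
    (hSm : ∀ k, MeasurableSet (S k)) (hS : ∀ k, ∀ᵐ x ∂μ, x ∉ S k → u k x = 0)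
    {A : Set α} (hA : MeasurableSet A)
    (hSA : Tendsto (fun k => μ (symmDiff (S k) A)) atTop (𝓝 0)) {ustar : Lp ℝ 2 μ}
    (hweak : ∀ w, Tendsto (fun k => inner ℝ (u k) w) atTop (𝓝 (inner ℝ ustar w))) :
    ∀ᵐ x ∂μ, x ∉ A → ustar x = 0 := by
  set w := indicatorLp Aᶜ hA.compl ustar
  set H := fun k => indicatorLp (S k ∩ Aᶜ) ((hSm k).inter hA.compl) ustar
  have hH : Tendsto (fun k => ‖H k‖) atTop (𝓝 0) := by
    refine tendsto_norm_indicatorLp ENNReal.ofNat_ne_top ustar _ ?_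
    refine tendsto_of_tendsto_of_tendsto_of_le_of_le tendsto_const_nhds hSA (fun _ => zero_le)
      fun k => measure_mono fun x hx => Or.inl hx
  obtain ⟨C, hC⟩ := exists_norm_le_of_weak_tendsto hweak
  have hlim : Tendsto (fun k => inner ℝ (u k) w) atTop (𝓝 0) := by
    refine squeeze_zero_norm (fun k => ?_) (by simpa using hH.const_mul C)
    rw [inner_indicatorLp_of_ae_eq_zero_off _ (hSm k) (hS k)]
    exact (norm_inner_le_norm _ _).trans
      (mul_le_mul_of_nonneg_right (hC k) (norm_nonneg _))
  have hw : w = 0 := by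
    rw [← inner_self_eq_zero (𝕜 := ℝ), ← inner_indicatorLp_self]
    exact tendsto_nhds_unique (hweak w) hlim
  filter_upwards [coeFn_indicatorLp hA.compl ustar, (Lp.eq_zero_iff_ae_eq_zero).1 hw]
    with x hwx hw0 hx
  simpa [hx] using hwx.symm.trans hw0

end L2

end MeasureTheory

theorem weak_limit_vanishes_off_support_general (n : ℕ) (Ω : Set (EuclideanSpace ℝ (Fin n)))
    (u : ℕ → Lp ℝ 2 (volume.restrict Ω))
    (A : Set (EuclideanSpace ℝ (Fin n))) (hA : MeasurableSet A)
    (hchi : Tendsto (fun k : ℕ => ∫⁻ x, ENNReal.ofReal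
        |chiSupp (u k : EuclideanSpace ℝ (Fin n) → ℝ) x -
          A.indicator (fun _ => (1 : ℝ)) x| ∂(volume.restrict Ω)) atTop (nhds 0))
    (ustar : Lp ℝ 2 (volume.restrict Ω))
    (ks : ℕ → ℕ) (hks : StrictMono ks)
    (hweak : ∀ w : Lp ℝ 2 (volume.restrict Ω),
      Tendsto (fun m : ℕ => (inner ℝ (u (ks m)) w : ℝ)) atTop (nhds (inner ℝ ustar w : ℝ))) :
    ∀ᵐ x ∂(volume.restrict Ω),
      (1 - A.indicator (fun _ => (1 : ℝ)) x) * (ustar : EuclideanSpace ℝ (Fin n) → ℝ) x = 0 := by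
  set S := fun k => {x | (u k : EuclideanSpace ℝ (Fin n) → ℝ) x ≠ 0}
  have hSm : ∀ k, MeasurableSet (S k) := fun k =>
    (Lp.stronglyMeasurable (u k)).measurable (measurableSet_singleton 0).compl
  have hSA : Tendsto (fun k => volume.restrict Ω (symmDiff (S k) A)) atTop (𝓝 0) :=
    hchi.congr fun k => lintegral_ofReal_abs_indicator_one_sub_indicator_one (hSm k) hA
  have hvanish := L2.ae_eq_zero_off_of_weak_tendsto (fun m => hSm (ks m))
    (fun m => ae_of_all _ fun _ => not_not.1) hA (hSA.comp hks.tendsto_atTop) hweak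
  filter_upwards [hvanish] with x hx
  by_cases hxA : x ∈ A <;> simp [hxA, hx]

/-- if the characteristic functions `χ_k` of `{u_k ≠ 0}` converge in `L¹(Ω)` to
the characteristic function `χ` of a set `A`, and a subsequence `u_{k_n}` converges weakly in
`L²(Ω)` to `u*`, then `(1 − χ)·u* = 0` almost everywhere in `Ω`. -/
theorem weak_limit_vanishes_off_support (n : ℕ) (Ω : Set (EuclideanSpace ℝ (Fin n)))
    (hΩ : MeasurableSet Ω) (hfin : volume Ω < ⊤)
    (u : ℕ → Lp ℝ 2 (volume.restrict Ω))
    (A : Set (EuclideanSpace ℝ (Fin n))) (hA : MeasurableSet A)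
    (hchi : Tendsto (fun k : ℕ => ∫⁻ x, ENNReal.ofReal
        |chiSupp (u k : EuclideanSpace ℝ (Fin n) → ℝ) x -
          A.indicator (fun _ => (1 : ℝ)) x| ∂(volume.restrict Ω)) atTop (nhds 0))
    (ustar : Lp ℝ 2 (volume.restrict Ω))
    (ks : ℕ → ℕ) (hks : StrictMono ks)
    (hweak : ∀ w : Lp ℝ 2 (volume.restrict Ω),
      Tendsto (fun m : ℕ => (inner ℝ (u (ks m)) w : ℝ)) atTop (nhds (inner ℝ ustar w : ℝ))) :
    ∀ᵐ x ∂(volume.restrict Ω),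
      (1 - A.indicator (fun _ => (1 : ℝ)) x) * (ustar : EuclideanSpace ℝ (Fin n) → ℝ) x = 0 :=
  weak_limit_vanishes_off_support_general n Ω u A hA hchi ustar ks hks hweak
end

section
/- Let g : ℝ → ℝ ∪ {+∞} be proper, lower semicontinuous and bounded below, and L > 0. Then the set-valued map G has closed graph (hence is outer semicontinuous): if u_n ∈ G(q_n) for all n, u_n → u and q_n → q in ℝ, then u ∈ G(q). The same holds for G⁰; moreover, if u₀ > 0 and q₀ > 0 are constants such that every element of prox_{L⁻¹g}(q) is 0 or of modulus at least u₀ (for all q), then G⁺ and G⁻ also have closed graphs. -/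
/-- `u ∈ G(z)` for the set-valued map `G = G_L`: `u` is a global minimizer of
`v ↦ −z·v + (L/2)(v − u)² + g(v)`. -/
def InG (g : ℝ → EReal) (L z u : ℝ) : Prop :=
  ∀ v : ℝ, ((-z * u : ℝ) : EReal) + g u ≤ ((-z * v + L / 2 * (v - u) ^ 2 : ℝ) : EReal) + g v

/-!
For fixed `v`, the inequality defining `u ∈ G(z)` compares a lower semicontinuous function of
`(z, u)` with a continuous one, so the graph of `G` is an intersection of closed sets, and the
graph of `G⁰` is its trace on a closed line. Multiplying the inequality by `L⁻¹` and completing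
the square shows `u ∈ prox_{L⁻¹g}(u + z / L)`; under the gap assumption every positive
`u ∈ G(z)` is then at least `u₀`, so the graph of `G⁺` is the closed set
`graph G ∩ {u ≥ u₀}`, and symmetrically for `G⁻`.
-/

open Set

lemma LowerSemicontinuous.isClosed_setOf_le {X γ : Type*} [TopologicalSpace X] [LinearOrder γ]
    [TopologicalSpace γ] [ClosedIciTopology γ] {f g : X → γ} (hf : LowerSemicontinuous f)
    (hg : Continuous g) : IsClosed {x | f x ≤ g x} :=
  hf.isClosed_epigraph.preimage (continuous_id.prodMk hg)

lemma EReal.continuousAt_add_coe_left (a : ℝ) (e : EReal) :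
    ContinuousAt (fun p : EReal × EReal => p.1 + p.2) (a, e) :=
  EReal.continuousAt_add (Or.inl (EReal.coe_ne_top a)) (Or.inl (EReal.coe_ne_bot a))

lemma Continuous.coe_ereal_add_const {X : Type*} [TopologicalSpace X] {r : X → ℝ}
    (hr : Continuous r) (e : EReal) : Continuous fun x => (r x : EReal) + e :=
  continuous_iff_continuousAt.2 fun x =>
    (EReal.continuousAt_add_coe_left (r x) e).comp (f := fun x => ((r x : EReal), e))
      ((EReal.continuous_coe_iff.2 hr).prodMk continuous_const).continuousAt

lemma LowerSemicontinuous.coe_ereal_add {X : Type*} [TopologicalSpace X] {r : X → ℝ}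
    {f : X → EReal} (hf : LowerSemicontinuous f) (hr : Continuous r) :
    LowerSemicontinuous fun x => (r x : EReal) + f x :=
  (EReal.continuous_coe_iff.2 hr).lowerSemicontinuous.add' hf fun x =>
    EReal.continuousAt_add_coe_left (r x) (f x)

theorem isClosed_setOf_inG {g : ℝ → EReal} (hg : LowerSemicontinuous g) (L : ℝ) :
    IsClosed {p : ℝ × ℝ | InG g L p.1 p.2} := by
  simp only [InG, ofPred_forall]
  exact isClosed_iInter fun v =>
    ((hg.comp continuous_snd).coe_ereal_add (by fun_prop)).isClosed_setOf_le
      (Continuous.coe_ereal_add_const (by fun_prop) (g v))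

theorem InG.isProx {g : ℝ → EReal} {L z u : ℝ} (hL : 0 < L) (h : InG g L z u) :
    IsProx g L⁻¹ (u + z / L) u := by
  intro v
  -- scale by `L⁻¹`, then adding `z² / (2L²) + z u / L` completes `(v - u)² / 2 - z (v - u) / L`
  -- to the square `(v - (u + z / L))² / 2`
  have hL' : (0 : EReal) ≤ (L⁻¹ : ℝ) := EReal.coe_nonneg.2 (inv_nonneg.2 hL.le)
  have key := add_le_add_left (mul_le_mul_of_nonneg_left (h v) hL')
    ((z ^ 2 / (2 * L ^ 2) + z * u / L : ℝ) : EReal)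
  rw [EReal.left_distrib_of_nonneg_of_ne_top hL' (EReal.coe_ne_top _),
    EReal.left_distrib_of_nonneg_of_ne_top hL' (EReal.coe_ne_top _),
    add_right_comm _ (_ * g u), add_right_comm _ (_ * g v),
    ← EReal.coe_mul, ← EReal.coe_mul, ← EReal.coe_add, ← EReal.coe_add] at key
  convert key using 3
  · field_simp; ring
  · field_simp; ring

theorem IsClosed.setOf_pos_of_gap {X : Type*} [TopologicalSpace X] {s : Set X} (hs : IsClosed s)
    {f : X → ℝ} (hf : Continuous f) {δ : ℝ} (hδ : 0 < δ) (hgap : ∀ x ∈ s, f x = 0 ∨ δ ≤ |f x|) :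
    IsClosed {x | x ∈ s ∧ 0 < f x} := by
  have : {x | x ∈ s ∧ 0 < f x} = s ∩ {x | δ ≤ f x} := by
    ext x
    refine ⟨fun ⟨hx, hpos⟩ => ⟨hx, ?_⟩, fun ⟨hx, hδx⟩ => ⟨hx, hδ.trans_le hδx⟩⟩
    simpa [hpos.ne', abs_of_pos hpos] using hgap x hx
  rw [this]
  exact hs.inter (_root_.isClosed_le continuous_const hf)

theorem G_closed_graphs_general (g : ℝ → EReal)
    (hglsc : LowerSemicontinuous g)
    (L : ℝ) (hL : 0 < L) :
    IsClosed {p : ℝ × ℝ | InG g L p.1 p.2}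
    ∧ IsClosed {p : ℝ × ℝ | InG g L p.1 p.2 ∧ p.2 = 0}
    ∧ (∀ u₀ q₀ : ℝ, 0 < u₀ → 0 < q₀ →
        (∀ q u : ℝ, IsProx g L⁻¹ q u → u = 0 ∨ u₀ ≤ |u|) →
        IsClosed {p : ℝ × ℝ | InG g L p.1 p.2 ∧ 0 < p.2}
        ∧ IsClosed {p : ℝ × ℝ | InG g L p.1 p.2 ∧ p.2 < 0}) := by
  have hG := isClosed_setOf_inG hglsc L
  refine ⟨hG, hG.inter (isClosed_eq continuous_snd continuous_const), ?_⟩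
  intro u₀ _ hu₀ _ hprox
  have hgap : ∀ p ∈ {p : ℝ × ℝ | InG g L p.1 p.2}, p.2 = 0 ∨ u₀ ≤ |p.2| :=
    fun p hp => hprox _ _ (hp.isProx hL)
  refine ⟨hG.setOf_pos_of_gap continuous_snd hu₀ hgap, ?_⟩
  simpa using hG.setOf_pos_of_gap continuous_snd.neg hu₀ (by simpa using hgap)

/-- for proper, lsc, bounded-below `g` and `L > 0`, the set-valued maps `G` and
`G⁰` have closed graphs (hence are outer semicontinuous); if moreover `u₀ > 0` and `q₀ > 0` are
constants such that every element of `prox_{L⁻¹ g}(q)` is `0` or of modulus at least `u₀`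
(for all `q`), then `G⁺` and `G⁻` also have closed graphs. -/
theorem G_closed_graphs (g : ℝ → EReal)
    (hgproper : ∃ x : ℝ, g x ≠ ⊤)
    (hgbdd : ∃ c : ℝ, ∀ x : ℝ, (c : EReal) ≤ g x)
    (hglsc : LowerSemicontinuous g)
    (L : ℝ) (hL : 0 < L) :
    IsClosed {p : ℝ × ℝ | InG g L p.1 p.2}
    ∧ IsClosed {p : ℝ × ℝ | InG g L p.1 p.2 ∧ p.2 = 0}
    ∧ (∀ u₀ q₀ : ℝ, 0 < u₀ → 0 < q₀ →
        (∀ q u : ℝ, IsProx g L⁻¹ q u → u = 0 ∨ u₀ ≤ |u|) →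
        IsClosed {p : ℝ × ℝ | InG g L p.1 p.2 ∧ 0 < p.2}
        ∧ IsClosed {p : ℝ × ℝ | InG g L p.1 p.2 ∧ p.2 < 0}) :=
  G_closed_graphs_general g hglsc L hL
end

section
/- Let (Ω, 𝒜, μ) be a finite measure space and F : ℝ^m ⇉ ℝ^n a set-valued map. Let (x_n) and (y_n) be sequences of measurable functions such that: x_n converges μ-almost everywhere to a function x : Ω → ℝ^m; y_n converges weakly in L¹(μ; ℝ^n) to a function y; and y_n(t) ∈ F(x_n(t)) for μ-almost all t ∈ Ω, for every n. Then for μ-almost all t ∈ Ω it holds y(t) ∈ (conv^∞ F)(x(t)). -/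
open MeasureTheory Filter

/-- The (Painlevé–Kuratowski) outer limit of a sequence of sets: the set of all limits of
convergent subsequences `y_j ∈ A_{k_j}`. -/
def outerLimit {X : Type*} [TopologicalSpace X] (A : ℕ → Set X) : Set X :=
  {y | ∃ (φ : ℕ → ℕ) (z : ℕ → X), StrictMono φ ∧ (∀ j, z j ∈ A (φ j)) ∧
    Tendsto z atTop (nhds y)}

/-- `(conv^∞ F)(x) := limsup_{k → ∞} conv (F (x + B_{1/k}(0)))` for a set-valued map `F`. -/
def convInf {m nn : ℕ} (F : EuclideanSpace ℝ (Fin m) → Set (EuclideanSpace ℝ (Fin nn)))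
    (x : EuclideanSpace ℝ (Fin m)) : Set (EuclideanSpace ℝ (Fin nn)) :=
  outerLimit (fun k => convexHull ℝ (⋃ x' ∈ Metric.ball x (1 / (k + 1) : ℝ), F x'))

open Metric Set Topology
open scoped RealInnerProductSpace

/-! Fix a radius `r` and put `C x = conv F(B(x, r))`. Each `{x | w ∈ C x}` is open, so
`(x, z) ↦ infDist z (C x)` is upper semicontinuous, hence Borel. The residual `z - P z` of the
nearest-point map onto `closure (C x)` is half the gradient of `infDist · (C x) ^ 2`, hence a limit
of difference quotients, hence measurable in `(x, z)`; call `g t` its value at `(x t, y t)`.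
Wherever `x_n t → x t`, eventually `y_n t ∈ C (x t)`, and the variational inequality of `P` gives
`⟪y_n t - y t, g t⟫ ≤ -‖g t‖²`. Testing the weak convergence against `g` cut off to the sets where
`‖g‖ ≤ M` and this inequality holds from `N` on forces `g = 0` a.e., i.e.
`y t ∈ closure (C (x t))`; taking `r = 1/(k+1)` for all `k` puts `y t` in the outer limit. -/

section ConvexHullFamily

variable {X E : Type*} [TopologicalSpace X]

theorem isOpen_setOf_mem_convexHull [AddCommGroup E] [Module ℝ E] {A : X → Set E}
    (hA : ∀ z, IsOpen {x | z ∈ A x}) (w : E) : IsOpen {x | w ∈ convexHull ℝ (A x)} := by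
  refine isOpen_iff_mem_nhds.2 fun x₀ hx₀ => ?_
  obtain ⟨T, hTA, hwT⟩ : ∃ T : Finset E, ↑T ⊆ A x₀ ∧ w ∈ convexHull ℝ (T : Set E) := by
    rw [mem_ofPred_eq, convexHull_eq_union_convexHull_finite_subsets] at hx₀
    simpa using hx₀
  have hT : ∀ᶠ x in 𝓝 x₀, ∀ z ∈ T, z ∈ A x :=
    (eventually_all_finset T).2 fun z hz => (hA z).mem_nhds (hTA hz)
  filter_upwards [hT] with x hx
  exact convexHull_mono hx hwT

theorem upperSemicontinuous_infEDist [PseudoEMetricSpace E] {A : X → Set E}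
    (hA : ∀ z, IsOpen {x | z ∈ A x}) :
    UpperSemicontinuous fun p : X × E => infEDist p.2 (A p.1) := by
  intro p c hc
  obtain ⟨w, hw, hwc⟩ := infEDist_lt_iff.1 hc
  have hnhds : {x | w ∈ A x} ×ˢ {z | edist z w < c} ∈ 𝓝 p :=
    prod_mem_nhds ((hA w).mem_nhds hw)
      ((isOpen_lt (continuous_id.edist continuous_const) continuous_const).mem_nhds hwc)
  filter_upwards [hnhds] with q hq
  exact (infEDist_le_edist_of_mem (show w ∈ A q.1 from hq.1)).trans_lt hq.2

end ConvexHullFamily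

theorem isOpen_setOf_mem_biUnion_ball {X E : Type*} [PseudoMetricSpace X] (F : X → Set E) (r : ℝ)
    (z : E) : IsOpen {x | z ∈ ⋃ x' ∈ ball x r, F x'} := by
  have : {x | z ∈ ⋃ x' ∈ ball x r, F x'} = ⋃ x' ∈ {x' | z ∈ F x'}, ball x' r := by
    ext x; simp [dist_comm x, and_comm]
  rw [this]
  exact isOpen_biUnion fun _ _ => isOpen_ball

theorem measurable_infDist_convexHull_biUnion_ball {X E : Type*} [PseudoMetricSpace X]
    [SecondCountableTopology X] [MeasurableSpace X] [BorelSpace X] [SeminormedAddCommGroup E]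
    [NormedSpace ℝ E] [SecondCountableTopology E] [MeasurableSpace E] [BorelSpace E]
    (F : X → Set E) (r : ℝ) :
    Measurable fun p : X × E => infDist p.2 (convexHull ℝ (⋃ x' ∈ ball p.1 r, F x')) :=
  (upperSemicontinuous_infEDist (E := E) fun z =>
    isOpen_setOf_mem_convexHull (isOpen_setOf_mem_biUnion_ball F r) z).measurable.ennreal_toReal

theorem eventually_mem_biUnion_ball {X E : Type*} [PseudoMetricSpace X] {F : X → Set E}
    {xs : ℕ → X} {x : X} {ys : ℕ → E} (hx : Tendsto xs atTop (𝓝 x)) (hmem : ∀ n, ys n ∈ F (xs n))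
    {r : ℝ} (hr : 0 < r) : ∀ᶠ n in atTop, ys n ∈ ⋃ x' ∈ ball x r, F x' :=
  (hx.eventually (ball_mem_nhds x hr)).mono fun n hn => mem_biUnion hn (hmem n)

theorem mem_outerLimit_of_forall_mem_closure {X : Type*} [TopologicalSpace X]
    [FirstCountableTopology X] {A : ℕ → Set X} {y : X} (h : ∀ k, y ∈ closure (A k)) :
    y ∈ outerLimit A := by
  obtain ⟨U, hU⟩ := (𝓝 y).exists_antitone_basis
  choose z hz using fun k => mem_closure_iff_nhds.1 (h k) (U k) (hU.mem k)
  exact ⟨id, z, strictMono_id, fun k => (hz k).2, hU.tendsto fun k => (hz k).1⟩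

section NearestPoint

variable {E : Type*} [NormedAddCommGroup E] [InnerProductSpace ℝ E] {s : Set E}

-- The junk value `y` for `s = ∅` makes `y - nearestPt s y` vanish there.
open Classical in
noncomputable def nearestPt (s : Set E) (y : E) : E :=
  if h : ∃ p ∈ closure s, ‖y - p‖ = ⨅ w : closure s, ‖y - w‖ then h.choose else y

variable [CompleteSpace E]

theorem nearestPt_spec (hs : Convex ℝ s) (hne : s.Nonempty) (y : E) :
    nearestPt s y ∈ closure s ∧ ‖y - nearestPt s y‖ = ⨅ w : closure s, ‖y - w‖ := by
  have h := exists_norm_eq_iInf_of_complete_convex hne.closure isClosed_closure.isComplete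
    hs.closure y
  rw [nearestPt, dif_pos h]
  exact h.choose_spec

theorem nearestPt_mem_closure (hs : Convex ℝ s) (hne : s.Nonempty) (y : E) :
    nearestPt s y ∈ closure s :=
  (nearestPt_spec hs hne y).1

theorem norm_sub_nearestPt (hs : Convex ℝ s) (y : E) : ‖y - nearestPt s y‖ = infDist y s := by
  rcases s.eq_empty_or_nonempty with rfl | hne
  · simp [nearestPt]
  rw [(nearestPt_spec hs hne y).2, ← infDist_closure, infDist_eq_iInf]
  simp_rw [dist_eq_norm]

theorem inner_sub_nearestPt_nonpos (hs : Convex ℝ s) {w : E} (hw : w ∈ closure s) (y : E) :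
    ⟪y - nearestPt s y, w - nearestPt s y⟫ ≤ 0 := by
  have hspec := nearestPt_spec hs (closure_nonempty_iff.1 ⟨w, hw⟩) y
  exact (norm_eq_iInf_iff_real_inner_le_zero hs.closure hspec.1).1 hspec.2 w hw

theorem inner_sub_sub_nearestPt_le (hs : Convex ℝ s) {w : E} (hw : w ∈ closure s) (y : E) :
    ⟪w - y, y - nearestPt s y⟫ ≤ -‖y - nearestPt s y‖ ^ 2 := by
  have h := inner_sub_nearestPt_nonpos hs hw y
  rw [show w - y = (w - nearestPt s y) - (y - nearestPt s y) by abel, inner_sub_left,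
    real_inner_self_eq_norm_sq, real_inner_comm]
  linarith

theorem infDist_add_sq_le (hs : Convex ℝ s) (y h : E) :
    infDist (y + h) s ^ 2 ≤ infDist y s ^ 2 + 2 * ⟪y - nearestPt s y, h⟫ + ‖h‖ ^ 2 := by
  rcases s.eq_empty_or_nonempty with rfl | hne
  · simp [nearestPt]
  have hle : infDist (y + h) s ≤ ‖(y - nearestPt s y) + h‖ := by
    rw [← infDist_closure, show (y - nearestPt s y) + h = (y + h) - nearestPt s y by abel,
      ← dist_eq_norm]
    exact infDist_le_dist_of_mem (nearestPt_mem_closure hs hne y)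
  calc infDist (y + h) s ^ 2 ≤ ‖(y - nearestPt s y) + h‖ ^ 2 := by gcongr; exact infDist_nonneg
    _ = infDist y s ^ 2 + 2 * ⟪y - nearestPt s y, h⟫ + ‖h‖ ^ 2 := by
      rw [norm_add_sq_real, norm_sub_nearestPt hs]

theorem le_infDist_add_sq (hs : Convex ℝ s) (y h : E) :
    infDist y s ^ 2 + 2 * ⟪y - nearestPt s y, h⟫ ≤ infDist (y + h) s ^ 2 := by
  rcases s.eq_empty_or_nonempty with rfl | hne
  · simp [nearestPt]
  set P := nearestPt s y
  set Q := nearestPt s (y + h)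
  have hQ : ⟪y - P, Q - P⟫ ≤ 0 := inner_sub_nearestPt_nonpos hs (nearestPt_mem_closure hs hne _) y
  calc infDist y s ^ 2 + 2 * ⟪y - P, h⟫
      ≤ ‖y - P‖ ^ 2 + 2 * ⟪y - P, h - (Q - P)⟫ + ‖h - (Q - P)‖ ^ 2 := by
        rw [inner_sub_right, norm_sub_nearestPt hs]
        nlinarith [sq_nonneg ‖h - (Q - P)‖]
    _ = infDist (y + h) s ^ 2 := by
      rw [← norm_add_sq_real, ← norm_sub_nearestPt hs]
      congr 2
      abel

theorem tendsto_slope_infDist_sq (hs : Convex ℝ s) (y v : E) :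
    Tendsto (fun j : ℕ => ((j : ℝ) + 1) *
        (infDist (y + (1 / ((j : ℝ) + 1)) • v) s ^ 2 - infDist y s ^ 2))
      atTop (𝓝 (2 * ⟪y - nearestPt s y, v⟫)) := by
  have hlim : Tendsto (fun j : ℕ => 2 * ⟪y - nearestPt s y, v⟫ + 1 / ((j : ℝ) + 1) * ‖v‖ ^ 2)
      atTop (𝓝 (2 * ⟪y - nearestPt s y, v⟫)) := by
    simpa using (tendsto_one_div_add_atTop_nhds_zero_nat.mul_const (‖v‖ ^ 2)).const_add
      (2 * ⟪y - nearestPt s y, v⟫)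
  refine tendsto_of_tendsto_of_tendsto_of_le_of_le tendsto_const_nhds hlim (fun j => ?_) fun j => ?_
  all_goals
    have ha : (0 : ℝ) ≤ j + 1 := by positivity
    have hca : ((j : ℝ) + 1) * (1 / ((j : ℝ) + 1)) = 1 := by field_simp
  · have h := le_infDist_add_sq hs y ((1 / ((j : ℝ) + 1)) • v)
    rw [inner_smul_right] at h
    calc 2 * ⟪y - nearestPt s y, v⟫
        = ((j : ℝ) + 1) * (2 * (1 / ((j : ℝ) + 1) * ⟪y - nearestPt s y, v⟫)) := by
          linear_combination (-2 * ⟪y - nearestPt s y, v⟫) * hca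
      _ ≤ _ := mul_le_mul_of_nonneg_left (by linarith) ha
  · have h := infDist_add_sq_le hs y ((1 / ((j : ℝ) + 1)) • v)
    rw [inner_smul_right, norm_smul, Real.norm_of_nonneg (by positivity)] at h
    calc _ ≤ ((j : ℝ) + 1) * (2 * (1 / ((j : ℝ) + 1) * ⟪y - nearestPt s y, v⟫)
            + (1 / ((j : ℝ) + 1) * ‖v‖) ^ 2) := mul_le_mul_of_nonneg_left (by linarith) ha
      _ = _ := by
          linear_combination (2 * ⟪y - nearestPt s y, v⟫ + 1 / ((j : ℝ) + 1) * ‖v‖ ^ 2) * hca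

end NearestPoint

theorem measurable_sub_nearestPt {X E : Type*} [MeasurableSpace X] [NormedAddCommGroup E]
    [InnerProductSpace ℝ E] [FiniteDimensional ℝ E] [MeasurableSpace E] [BorelSpace E]
    {s : X → Set E} (hs : ∀ x, Convex ℝ (s x))
    (hd : Measurable fun p : X × E => infDist p.2 (s p.1)) :
    Measurable fun p : X × E => p.2 - nearestPt (s p.1) p.2 := by
  let b := stdOrthonormalBasis ℝ E
  have hcoord : ∀ i, Measurable fun p : X × E => ⟪b i, p.2 - nearestPt (s p.1) p.2⟫ := by
    intro i
    have hslope : ∀ j : ℕ, Measurable fun p : X × E => ((j : ℝ) + 1) *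
        (infDist (p.2 + (1 / ((j : ℝ) + 1)) • b i) (s p.1) ^ 2 - infDist p.2 (s p.1) ^ 2) / 2 :=
      fun j => ((((hd.comp (measurable_fst.prodMk (measurable_snd.add_const _))).pow_const 2).sub
        (hd.pow_const 2)).const_mul _).div_const 2
    refine measurable_of_tendsto_metrizable hslope (tendsto_pi_nhds.2 fun p => ?_)
    simpa [real_inner_comm] using (tendsto_slope_infDist_sq (hs p.1) p.2 (b i)).div_const 2
  rw [show (fun p : X × E => p.2 - nearestPt (s p.1) p.2) =
      fun p => ∑ i, ⟪b i, p.2 - nearestPt (s p.1) p.2⟫ • b i from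
    funext fun p => (b.sum_repr' _).symm]
  exact Finset.measurable_sum _ fun i _ => (hcoord i).smul_const _

section WeakLimit

variable {Ω E : Type*} [MeasurableSpace Ω] {μ : Measure Ω} [NormedAddCommGroup E]
  [InnerProductSpace ℝ E]

theorem MeasureTheory.Integrable.inner_of_norm_le {f b : Ω → E} (hf : Integrable f μ)
    (hb : AEStronglyMeasurable b μ) {C : ℝ} (hC : ∀ t, ‖b t‖ ≤ C) :
    Integrable (fun t => ⟪f t, b t⟫) μ :=
  (hf.norm.mul_const C).mono' (hf.1.inner hb) (Eventually.of_forall fun t =>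
    (norm_inner_le_norm _ _).trans (mul_le_mul_of_nonneg_left (hC t) (norm_nonneg _)))

variable [MeasurableSpace E]

def TendstoWeakL1 (μ : Measure Ω) (ys : ℕ → Ω → E) (y : Ω → E) : Prop :=
  ∀ b : Ω → E, Measurable b → (∃ C : ℝ, ∀ t, ‖b t‖ ≤ C) →
    Tendsto (fun n => ∫ t, ⟪ys n t, b t⟫ ∂μ) atTop (𝓝 (∫ t, ⟪y t, b t⟫ ∂μ))

variable [BorelSpace E] [SecondCountableTopology E] {ys : ℕ → Ω → E} {y : Ω → E}

theorem ae_eq_zero_of_inner_sub_le_neg_sq (hys : ∀ n, Integrable (ys n) μ) (hy : Integrable y μ)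
    (hweak : TendstoWeakL1 μ ys y) {b : Ω → E} (hb : Measurable b) {C : ℝ} (hC : ∀ t, ‖b t‖ ≤ C)
    {N : ℕ} (hN : ∀ n ≥ N, ∀ t, ⟪ys n t - y t, b t⟫ ≤ -‖b t‖ ^ 2) : b =ᵐ[μ] 0 := by
  have hint : ∀ n, Integrable (fun t => ⟪ys n t - y t, b t⟫) μ := fun n =>
    ((hys n).sub hy).inner_of_norm_le hb.aestronglyMeasurable hC
  have hlim : Tendsto (fun n => ∫ t, ⟪ys n t - y t, b t⟫ ∂μ) atTop (𝓝 0) := by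
    have h := (hweak b hb ⟨C, hC⟩).sub_const (∫ t, ⟪y t, b t⟫ ∂μ)
    rw [sub_self] at h
    refine h.congr fun n => ?_
    simp_rw [inner_sub_left]
    rw [integral_sub ((hys n).inner_of_norm_le hb.aestronglyMeasurable hC)
      (hy.inner_of_norm_le hb.aestronglyMeasurable hC)]
  have hsq_int : Integrable (fun t => ‖b t‖ ^ 2) μ :=
    (hint N).neg.mono' (hb.norm.pow_const 2).aestronglyMeasurable
      (Eventually.of_forall fun t => by
        rw [Real.norm_of_nonneg (by positivity), Pi.neg_apply]; linarith [hN N le_rfl t])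
  have hle : ∫ t, ‖b t‖ ^ 2 ∂μ ≤ 0 := by
    have hlim' : Tendsto (fun n => ∫ t, -⟪ys n t - y t, b t⟫ ∂μ) atTop (𝓝 0) := by
      simpa [integral_neg] using hlim.neg
    refine ge_of_tendsto hlim' (eventually_atTop.2 ⟨N, fun n hn => ?_⟩)
    exact integral_mono hsq_int (hint n).neg fun t => by linarith [hN n hn t]
  have hzero := (integral_eq_zero_iff_of_nonneg (fun t => by positivity) hsq_int).1
    (le_antisymm hle (integral_nonneg fun t => by positivity))
  filter_upwards [hzero] with t ht
  simpa using ht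

theorem ae_eq_zero_of_eventually_inner_sub_le_neg_sq (hysm : ∀ n, Measurable (ys n))
    (hym : Measurable y) (hys : ∀ n, Integrable (ys n) μ) (hy : Integrable y μ)
    (hweak : TendstoWeakL1 μ ys y) {g : Ω → E} (hg : Measurable g)
    (h : ∀ᵐ t ∂μ, ∀ᶠ n in atTop, ⟪ys n t - y t, g t⟫ ≤ -‖g t‖ ^ 2) : g =ᵐ[μ] 0 := by
  let S : ℕ → ℕ → Set Ω := fun N M =>
    {t | ‖g t‖ ≤ M ∧ ∀ n ≥ N, ⟪ys n t - y t, g t⟫ ≤ -‖g t‖ ^ 2}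
  have hS : ∀ N M, MeasurableSet (S N M) := fun N M => by
    simp only [S, ofPred_and, ofPred_forall]
    exact (measurableSet_le hg.norm measurable_const).inter (MeasurableSet.iInter fun n =>
      MeasurableSet.iInter fun _ => measurableSet_le (((hysm n).sub hym).inner hg)
        (hg.norm.pow_const 2).neg)
  have hzero : ∀ N M, (S N M).indicator g =ᵐ[μ] 0 := fun N M => by
    refine ae_eq_zero_of_inner_sub_le_neg_sq hys hy hweak (hg.indicator (hS N M)) (C := M)
      (fun t => ?_) (N := N) fun n hn t => ?_
    all_goals by_cases ht : t ∈ S N M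
    · simpa [ht] using ht.1
    · simp [ht]
    · simpa [ht] using ht.2 n hn
    · simp [ht]
  filter_upwards [h, ae_all_iff.2 fun N => ae_all_iff.2 (hzero N)] with t ht hS0
  obtain ⟨N, hN⟩ := eventually_atTop.1 ht
  obtain ⟨M, hM⟩ := exists_nat_ge ‖g t‖
  simpa [indicator_of_mem (show t ∈ S N M from ⟨hM, hN⟩)] using hS0 N M

end WeakLimit

theorem ae_mem_closure_convexHull_biUnion_ball {Ω X E : Type*} [MeasurableSpace Ω]
    {μ : Measure Ω} [PseudoMetricSpace X] [SecondCountableTopology X] [MeasurableSpace X]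
    [BorelSpace X]
    [NormedAddCommGroup E] [InnerProductSpace ℝ E] [FiniteDimensional ℝ E] [MeasurableSpace E]
    [BorelSpace E] {F : X → Set E} {x : Ω → X} {xs : ℕ → Ω → X} {y : Ω → E} {ys : ℕ → Ω → E}
    (hxsmeas : ∀ n, Measurable (xs n)) (hysmeas : ∀ n, Measurable (ys n)) (hymeas : Measurable y)
    (hysint : ∀ n, Integrable (ys n) μ) (hyint : Integrable y μ)
    (hxconv : ∀ᵐ t ∂μ, Tendsto (fun n => xs n t) atTop (𝓝 (x t)))
    (hweak : TendstoWeakL1 μ ys y) (hmem : ∀ n, ∀ᵐ t ∂μ, ys n t ∈ F (xs n t)) {r : ℝ}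
    (hr : 0 < r) : ∀ᵐ t ∂μ, y t ∈ closure (convexHull ℝ (⋃ x' ∈ ball (x t) r, F x')) := by
  let C : X → Set E := fun x => convexHull ℝ (⋃ x' ∈ ball x r, F x')
  have hx : AEMeasurable x μ :=
    aemeasurable_of_tendsto_metrizable_ae atTop (fun n => (hxsmeas n).aemeasurable) hxconv
  let g : Ω → E := fun t => y t - nearestPt (C (hx.mk x t)) (y t)
  have hg : Measurable g :=
    (measurable_sub_nearestPt (s := C) (fun _ => convex_convexHull ℝ _)
      (measurable_infDist_convexHull_biUnion_ball F r)).comp (hx.measurable_mk.prodMk hymeas)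
  have hgood : ∀ᵐ t ∂μ, (∀ᶠ n in atTop, ys n t ∈ C (x t)) ∧ x t = hx.mk x t := by
    filter_upwards [hxconv, ae_all_iff.2 hmem, hx.ae_eq_mk] with t hxt hmemt hmk
    exact ⟨(eventually_mem_biUnion_ball hxt hmemt hr).mono fun n hn => subset_convexHull ℝ _ hn,
      hmk⟩
  have hg0 : g =ᵐ[μ] 0 := by
    refine ae_eq_zero_of_eventually_inner_sub_le_neg_sq hysmeas hymeas hysint hyint hweak hg ?_
    filter_upwards [hgood] with t ⟨hev, hmk⟩
    exact hev.mono fun n hn =>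
      inner_sub_sub_nearestPt_le (convex_convexHull ℝ _) (subset_closure (hmk ▸ hn)) (y t)
  filter_upwards [hgood, hg0] with t ⟨hev, hmk⟩ hgt
  obtain ⟨n, hn⟩ := hev.exists
  rw [hmk, sub_eq_zero.1 hgt]
  exact nearestPt_mem_closure (convex_convexHull ℝ _) ⟨_, hmk ▸ hn⟩ _

theorem weak_limit_in_convInf_general {Ω : Type*} [MeasurableSpace Ω] (μ : Measure Ω)
    {m nn : ℕ}
    (F : EuclideanSpace ℝ (Fin m) → Set (EuclideanSpace ℝ (Fin nn)))
    (x : Ω → EuclideanSpace ℝ (Fin m)) (xs : ℕ → Ω → EuclideanSpace ℝ (Fin m))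
    (y : Ω → EuclideanSpace ℝ (Fin nn)) (ys : ℕ → Ω → EuclideanSpace ℝ (Fin nn))
    (hxsmeas : ∀ k, Measurable (xs k)) (hysmeas : ∀ k, Measurable (ys k))
    (hymeas : Measurable y)
    (hysint : ∀ k, Integrable (ys k) μ) (hyint : Integrable y μ)
    (hxconv : ∀ᵐ t ∂μ, Tendsto (fun k => xs k t) atTop (nhds (x t)))
    (hweak : ∀ b : Ω → EuclideanSpace ℝ (Fin nn), Measurable b →
      (∃ C : ℝ, ∀ t, ‖b t‖ ≤ C) →
      Tendsto (fun k => ∫ t, (inner ℝ (ys k t) (b t) : ℝ) ∂μ) atTop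
        (nhds (∫ t, (inner ℝ (y t) (b t) : ℝ) ∂μ)))
    (hmem : ∀ k, ∀ᵐ t ∂μ, ys k t ∈ F (xs k t)) :
    ∀ᵐ t ∂μ, y t ∈ convInf F (x t) := by
  have hball : ∀ k : ℕ, ∀ᵐ t ∂μ,
      y t ∈ closure (convexHull ℝ (⋃ x' ∈ ball (x t) (1 / (k + 1) : ℝ), F x')) := fun k =>
    ae_mem_closure_convexHull_biUnion_ball hxsmeas hysmeas hymeas hysint hyint hxconv hweak hmem
      (by positivity)
  filter_upwards [ae_all_iff.2 hball] with t ht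
  exact mem_outerLimit_of_forall_mem_closure ht

/-- if `(Ω, 𝒜, μ)` is a finite measure space, `F : ℝ^m ⇉ ℝ^n` a set-valued map,
`x_n` measurable functions converging a.e. to `x`, `y_n` measurable functions converging weakly
in `L¹(μ; ℝⁿ)` to `y`, and `y_n(t) ∈ F(x_n(t))` a.e. for each `n`, then
`y(t) ∈ (conv^∞ F)(x(t))` for `μ`-almost all `t`. -/
theorem weak_limit_in_convInf {Ω : Type*} [MeasurableSpace Ω] (μ : Measure Ω)
    [IsFiniteMeasure μ] {m nn : ℕ}
    (F : EuclideanSpace ℝ (Fin m) → Set (EuclideanSpace ℝ (Fin nn)))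
    (x : Ω → EuclideanSpace ℝ (Fin m)) (xs : ℕ → Ω → EuclideanSpace ℝ (Fin m))
    (y : Ω → EuclideanSpace ℝ (Fin nn)) (ys : ℕ → Ω → EuclideanSpace ℝ (Fin nn))
    (hxsmeas : ∀ k, Measurable (xs k)) (hysmeas : ∀ k, Measurable (ys k))
    (hymeas : Measurable y)
    (hysint : ∀ k, Integrable (ys k) μ) (hyint : Integrable y μ)
    (hxconv : ∀ᵐ t ∂μ, Tendsto (fun k => xs k t) atTop (nhds (x t)))
    (hweak : ∀ b : Ω → EuclideanSpace ℝ (Fin nn), Measurable b →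
      (∃ C : ℝ, ∀ t, ‖b t‖ ≤ C) →
      Tendsto (fun k => ∫ t, (inner ℝ (ys k t) (b t) : ℝ) ∂μ) atTop
        (nhds (∫ t, (inner ℝ (y t) (b t) : ℝ) ∂μ)))
    (hmem : ∀ k, ∀ᵐ t ∂μ, ys k t ∈ F (xs k t)) :
    ∀ᵐ t ∂μ, y t ∈ convInf F (x t) :=
  weak_limit_in_convInf_general μ F x xs y ys hxsmeas hysmeas hymeas hysint hyint hxconv hweak hmem
end

section
/- Let g := δ_ℤ be the indicator function of the integers (g(u) = 0 if u ∈ ℤ, +∞ otherwise), let f satisfy Assumption A, L > L_f, and let (u_k) be iterates of the proximal gradient algorithm with j(u_1) < ∞ (so each u_k is integer-valued almost everywhere). Then ‖u_{k+1} − u_k‖_{L^p(Ω)}^p ≥ ‖u_{k+1} − u_k‖_{L¹(Ω)} for every p ∈ [1, ∞), the sequence (u_k) is a Cauchy sequence in L¹(Ω) and converges strongly in L¹(Ω); in particular, if u* is a weak sequential limit point of (u_k) in L²(Ω), then u_k → u* strongly in L¹(Ω). -/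
/-!
Finiteness of `j` forces every iterate `u k` with `k ≥ 1` to be integer-valued almost everywhere,
so the increments are integer-valued and satisfy `|z| ≤ |z| ^ p`; in particular their `L¹` norms
are bounded by their squared `L²` norms. The descent lemma turns the minimality of `u (k + 1)` into
the sufficient decrease `f (u (k + 1)) + (L - L_f)/2 ‖u (k + 1) - u k‖² ≤ f (u k)`, so, `f` being
bounded below, the squared `L²` increments are summable. Hence the `L¹` increments are summable and
`(u k)` converges in the complete space `L¹`. A weak `L²` limit point is tested against indicators
of sets of finite measure, which also see the `L¹` limit, so the two limits agree.
-/

open MeasureTheory Filter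

open Classical in
/-- The indicator function `δ_ℤ` of the integers: `0` on `ℤ`, `+∞` elsewhere. -/
noncomputable def deltaZ (x : ℝ) : EReal :=
  if ∃ m : ℤ, (m : ℝ) = x then 0 else ⊤

open Set

theorem descent_lemma {E : Type*} [NormedAddCommGroup E] [InnerProductSpace ℝ E]
    {f : E → ℝ} {g : E → E} (hderiv : ∀ w, HasFDerivAt f (innerSL ℝ (g w)) w)
    {Lf : NNReal} (hlip : LipschitzWith Lf g) (x y : E) :
    f y ≤ f x + inner ℝ (g x) (y - x) + Lf / 2 * ‖y - x‖ ^ 2 := by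
  set d := y - x
  -- `ψ 1 ≤ ψ 0` is the claim, and `ψ' t = ⟪g (x + t • d) - g x, d⟫ - Lf t ‖d‖² ≤ 0` for `t ≥ 0`.
  set ψ : ℝ → ℝ := fun t => f (x + t • d) - t * inner ℝ (g x) d - Lf / 2 * t ^ 2 * ‖d‖ ^ 2
  have hψ : ∀ t, HasDerivAt ψ (inner ℝ (g (x + t • d) - g x) d - Lf * t * ‖d‖ ^ 2) t := by
    intro t
    have hline : HasDerivAt (fun t : ℝ => x + t • d) d t := by
      simpa using ((hasDerivAt_id t).smul_const d).const_add x
    refine ((((hderiv _).comp_hasDerivAt t hline).sub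
      ((hasDerivAt_id t).mul_const (inner ℝ (g x) d))).sub
      (((hasDerivAt_pow 2 t).const_mul (Lf / 2 : ℝ)).mul_const (‖d‖ ^ 2))).congr_deriv ?_
    simp only [innerSL_apply_apply, inner_sub_left]
    ring
  have hψ_nonpos : ∀ t ∈ interior (Ici (0 : ℝ)),
      inner ℝ (g (x + t • d) - g x) d - Lf * t * ‖d‖ ^ 2 ≤ 0 := by
    intro t ht
    rw [interior_Ici] at ht
    have hg : ‖g (x + t • d) - g x‖ ≤ Lf * (t * ‖d‖) := by
      simpa [dist_eq_norm, norm_smul, abs_of_pos (mem_Ioi.1 ht)] using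
        hlip.dist_le_mul (x + t • d) x
    nlinarith [norm_nonneg d, real_inner_le_norm (g (x + t • d) - g x) d]
  have hanti : AntitoneOn ψ (Ici 0) :=
    antitoneOn_of_hasDerivWithinAt_nonpos (convex_Ici 0)
      (fun t _ => (hψ t).continuousAt.continuousWithinAt)
      (fun t _ => (hψ t).hasDerivWithinAt) hψ_nonpos
  have h10 : ψ 1 ≤ ψ 0 := hanti self_mem_Ici (mem_Ici.2 zero_le_one) zero_le_one
  simp only [ψ, d, one_smul, zero_smul, add_zero, add_sub_cancel] at h10
  linarith

theorem summable_of_add_le_of_bddBelow {a b : ℕ → ℝ} (ha : BddBelow (range a))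
    (hb : ∀ k, 0 ≤ b k) (h : ∀ k, a (k + 1) + b k ≤ a k) : Summable b := by
  obtain ⟨m, hm⟩ := ha
  refine summable_of_sum_range_le (c := a 0 - m) hb fun N => ?_
  calc ∑ k ∈ Finset.range N, b k ≤ ∑ k ∈ Finset.range N, (a k - a (k + 1)) :=
        Finset.sum_le_sum fun k _ => by linarith [h k]
    _ = a 0 - a N := Finset.sum_range_sub' a N
    _ ≤ a 0 - m := by linarith [hm (mem_range_self N)]

theorem abs_intCast_le_abs_rpow (m : ℤ) {p : ℝ} (hp : 1 ≤ p) : |(m : ℝ)| ≤ |(m : ℝ)| ^ p := by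
  rcases eq_or_ne m 0 with rfl | hm
  · simp [Real.zero_rpow (by linarith : p ≠ 0)]
  · refine Real.self_le_rpow_of_one_le ?_ hp
    rw [← Int.cast_abs]
    exact_mod_cast Int.one_le_abs hm

section IntegerValued

variable {α : Type*} [MeasurableSpace α] {μ : Measure α}

theorem ae_sub_mem_range_intCast {a b : α → ℝ} (ha : ∀ᵐ x ∂μ, a x ∈ range ((↑) : ℤ → ℝ))
    (hb : ∀ᵐ x ∂μ, b x ∈ range ((↑) : ℤ → ℝ)) : ∀ᵐ x ∂μ, a x - b x ∈ range ((↑) : ℤ → ℝ) := by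
  filter_upwards [ha, hb] with x ⟨m, hm⟩ ⟨n, hn⟩
  exact ⟨m - n, by rw [Int.cast_sub, hm, hn]⟩

theorem lintegral_nnnorm_le_lintegral_rpow_of_ae_int {z : α → ℝ}
    (hz : ∀ᵐ x ∂μ, z x ∈ range ((↑) : ℤ → ℝ)) {p : ℝ} (hp : 1 ≤ p) :
    ∫⁻ x, (‖z x‖₊ : ENNReal) ∂μ ≤ ∫⁻ x, ENNReal.ofReal (|z x| ^ p) ∂μ := by
  refine lintegral_mono_ae (hz.mono fun x ⟨m, hm⟩ => ?_)
  rw [← enorm_eq_nnnorm, Real.enorm_eq_ofReal_abs, ← hm]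
  exact ENNReal.ofReal_le_ofReal (abs_intCast_le_abs_rpow m hp)

theorem erealToENNReal_deltaZ (r : ℝ) :
    erealToENNReal (deltaZ r) = (range ((↑) : ℤ → ℝ))ᶜ.indicator (fun _ => ⊤) r := by
  by_cases h : r ∈ range ((↑) : ℤ → ℝ) <;> simp_all [deltaZ, erealToENNReal]

theorem erealToENNReal_neg_deltaZ (r : ℝ) : erealToENNReal (-deltaZ r) = 0 := by
  unfold deltaZ; split_ifs <;> simp [erealToENNReal]

theorem jfun_deltaZ {w : α → ℝ} (hw : Measurable w) :
    jfun μ deltaZ w = ((⊤ * μ {x | w x ∉ range ((↑) : ℤ → ℝ)} : ENNReal) : EReal) := by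
  simp only [jfun, erealToENNReal_neg_deltaZ, lintegral_zero, EReal.coe_ennreal_zero, sub_zero,
    erealToENNReal_deltaZ]
  rw [lintegral_indicator_const_comp hw (countable_range _).measurableSet.compl]
  rfl

theorem jfun_deltaZ_ne_top_iff {w : α → ℝ} (hw : Measurable w) :
    jfun μ deltaZ w ≠ ⊤ ↔ ∀ᵐ x ∂μ, w x ∈ range ((↑) : ℤ → ℝ) := by
  rw [jfun_deltaZ hw, ae_iff, ne_eq, EReal.coe_ennreal_eq_top_iff, ENNReal.mul_eq_top]
  simp +contextual

theorem jfun_deltaZ_eq_zero {w : α → ℝ} (hw : Measurable w)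
    (h : ∀ᵐ x ∂μ, w x ∈ range ((↑) : ℤ → ℝ)) : jfun μ deltaZ w = 0 := by
  rw [jfun_deltaZ hw, ae_iff.1 h, mul_zero, EReal.coe_ennreal_zero]

end IntegerValued

namespace MeasureTheory.Lp

variable {α : Type*} [MeasurableSpace α] {μ : Measure α}

theorem lintegral_ofReal_abs_rpow_two (v : Lp ℝ 2 μ) :
    ∫⁻ x, ENNReal.ofReal (|v x| ^ (2 : ℝ)) ∂μ = ENNReal.ofReal (‖v‖ ^ 2) := by
  rw [← real_inner_self_eq_norm_sq, L2.inner_def,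
    ofReal_integral_eq_lintegral_ofReal (L2.integrable_inner v v)
      (ae_of_all _ fun x => real_inner_self_nonneg)]
  simp only [Real.rpow_two, sq_abs, real_inner_self_eq_norm_sq, Real.norm_eq_abs]

variable [IsFiniteMeasure μ]

noncomputable def toL1 (v : Lp ℝ 2 μ) : Lp ℝ 1 μ :=
  ((Lp.memLp v).mono_exponent one_le_two).toLp v

theorem coeFn_toL1 (v : Lp ℝ 2 μ) : toL1 v =ᵐ[μ] v :=
  MemLp.coeFn_toLp _

theorem edist_toL1 (v : Lp ℝ 2 μ) {G : Lp ℝ 1 μ} {g : α → ℝ} (hG : G =ᵐ[μ] g) :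
    edist (toL1 v) G = ∫⁻ x, (‖v x - g x‖₊ : ENNReal) ∂μ := by
  rw [Lp.edist_def, eLpNorm_one_eq_lintegral_enorm]
  refine lintegral_congr_ae ?_
  filter_upwards [coeFn_toL1 v, hG] with x hv hg
  rw [Pi.sub_apply, hv, hg, enorm_eq_nnnorm]

theorem edist_toL1_le_norm_sub_sq {a b : Lp ℝ 2 μ}
    (h : ∀ᵐ x ∂μ, a x - b x ∈ range ((↑) : ℤ → ℝ)) :
    edist (toL1 a) (toL1 b) ≤ ENNReal.ofReal (‖a - b‖ ^ 2) := by
  rw [edist_toL1 a (coeFn_toL1 b), ← lintegral_ofReal_abs_rpow_two]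
  refine (lintegral_nnnorm_le_lintegral_rpow_of_ae_int h one_le_two).trans_eq ?_
  refine lintegral_congr_ae ?_
  filter_upwards [Lp.coeFn_sub a b] with x hx
  rw [hx, Pi.sub_apply]

-- Weak `L²` limits are detected by integrals over sets of finite measure, which are continuous
-- on `L¹`.
theorem ae_eq_of_tendsto_inner_of_tendsto_toL1 {ι : Type*} {l : Filter ι} [l.NeBot]
    {v : ι → Lp ℝ 2 μ} {y : Lp ℝ 2 μ} {W : Lp ℝ 1 μ}
    (hweak : ∀ z, Tendsto (fun i => inner ℝ (v i) z) l (nhds (inner ℝ y z)))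
    (hstrong : Tendsto (fun i => toL1 (v i)) l (nhds W)) : (y : α → ℝ) =ᵐ[μ] W := by
  refine ae_eq_of_forall_setIntegral_eq_of_sigmaFinite
    (fun s _ _ => ((Lp.memLp y).integrable one_le_two).integrableOn)
    (fun s _ _ => (L1.integrable_coeFn W).integrableOn) fun s hs hμs => ?_
  have hinner : ∀ z : Lp ℝ 2 μ,
      inner ℝ z (indicatorConstLp 2 hs hμs.ne (1 : ℝ)) = ∫ x in s, z x ∂μ := fun z => by
    rw [real_inner_comm, L2.inner_indicatorConstLp_one]
  have h_toL1 : ∀ i, ∫ x in s, toL1 (v i) x ∂μ = ∫ x in s, v i x ∂μ := fun i =>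
    integral_congr_ae (ae_restrict_of_ae (coeFn_toL1 (v i)))
  refine tendsto_nhds_unique (f := fun i => ∫ x in s, v i x ∂μ) (l := l) ?_ ?_
  · simpa only [hinner] using hweak (indicatorConstLp 2 hs hμs.ne (1 : ℝ))
  · simpa only [Function.comp_def, h_toL1] using
      ((continuous_setIntegral s).tendsto W).comp hstrong

end MeasureTheory.Lp

section ProximalGradient

variable {E : Type*} [NormedAddCommGroup E] [InnerProductSpace ℝ E]

noncomputable def proxModel (f : E → ℝ) (gradf : E → E) (L : ℝ) (v w : E) : ℝ :=
  f v + inner ℝ (gradf v) (w - v) + L / 2 * ‖w - v‖ ^ 2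

@[simp]
theorem proxModel_self (f : E → ℝ) (gradf : E → E) (L : ℝ) (v : E) :
    proxModel f gradf L v v = f v := by
  simp [proxModel]

theorem sufficient_decrease_of_proxModel_le {f : E → ℝ} {gradf : E → E}
    (hderiv : ∀ w, HasFDerivAt f (innerSL ℝ (gradf w)) w) {Lf : NNReal}
    (hlip : LipschitzWith Lf gradf) {L : ℝ} {x y : E} (h : proxModel f gradf L x y ≤ f x) :
    f y + (L - Lf) / 2 * ‖y - x‖ ^ 2 ≤ f x := by
  have := descent_lemma hderiv hlip x y
  unfold proxModel at h
  linarith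

end ProximalGradient

section ProximalGradientLp

variable {α : Type*} [MeasurableSpace α]

def IsProxGradSeq (μ : Measure α) (g : ℝ → EReal) (f : Lp ℝ 2 μ → ℝ)
    (gradf : Lp ℝ 2 μ → Lp ℝ 2 μ) (L : ℝ) (u : ℕ → Lp ℝ 2 μ) : Prop :=
  ∀ k, IsMinOn (fun w : Lp ℝ 2 μ => (proxModel f gradf L (u k) w : EReal) + jfun μ g w) univ
    (u (k + 1))

namespace IsProxGradSeq

variable {μ : Measure α} {f : Lp ℝ 2 μ → ℝ} {gradf : Lp ℝ 2 μ → Lp ℝ 2 μ} {L : ℝ}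
  {u : ℕ → Lp ℝ 2 μ}

theorem le_proxModel_add_jfun {g : ℝ → EReal} (hu : IsProxGradSeq μ g f gradf L u) (k : ℕ)
    (w : Lp ℝ 2 μ) :
    (proxModel f gradf L (u k) (u (k + 1)) : EReal) + jfun μ g (u (k + 1)) ≤
      (proxModel f gradf L (u k) w : EReal) + jfun μ g w :=
  isMinOn_univ_iff.1 (hu k) w

-- Comparing with `w = u k` shows that `j (u (k + 1))` is finite once `j (u k)` is.
theorem ae_mem_range_intCast (hu : IsProxGradSeq μ deltaZ f gradf L u)
    (h1 : jfun μ deltaZ (u 1) ≠ ⊤) : ∀ k, 1 ≤ k → ∀ᵐ x ∂μ, u k x ∈ range ((↑) : ℤ → ℝ) := by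
  intro k hk
  induction k, hk using Nat.le_induction with
  | base => exact (jfun_deltaZ_ne_top_iff (Lp.stronglyMeasurable _).measurable).1 h1
  | succ k _ ih =>
    refine (jfun_deltaZ_ne_top_iff (Lp.stronglyMeasurable _).measurable).1 fun htop => ?_
    have h := hu.le_proxModel_add_jfun k (u k)
    rw [jfun_deltaZ_eq_zero (Lp.stronglyMeasurable _).measurable ih, htop, add_zero,
      EReal.coe_add_top] at h
    exact (EReal.coe_lt_top _).not_ge h

theorem ae_sub_mem_range_intCast (hu : IsProxGradSeq μ deltaZ f gradf L u)
    (h1 : jfun μ deltaZ (u 1) ≠ ⊤) {k : ℕ} (hk : 1 ≤ k) :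
    ∀ᵐ x ∂μ, u (k + 1) x - u k x ∈ range ((↑) : ℤ → ℝ) :=
  _root_.ae_sub_mem_range_intCast (hu.ae_mem_range_intCast h1 (k + 1) (by omega))
    (hu.ae_mem_range_intCast h1 k hk)

theorem proxModel_le (hu : IsProxGradSeq μ deltaZ f gradf L u) (h1 : jfun μ deltaZ (u 1) ≠ ⊤)
    {k : ℕ} (hk : 1 ≤ k) : proxModel f gradf L (u k) (u (k + 1)) ≤ f (u k) := by
  have h := hu.le_proxModel_add_jfun k (u k)
  have hj : ∀ i, 1 ≤ i → jfun μ deltaZ (u i) = 0 := fun i hi =>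
    jfun_deltaZ_eq_zero (Lp.stronglyMeasurable _).measurable (hu.ae_mem_range_intCast h1 i hi)
  rwa [hj k hk, hj (k + 1) (by omega), add_zero, add_zero, proxModel_self,
    EReal.coe_le_coe_iff] at h

theorem summable_norm_sub_sq (hu : IsProxGradSeq μ deltaZ f gradf L u)
    (h1 : jfun μ deltaZ (u 1) ≠ ⊤) (hf : BddBelow (range f))
    (hderiv : ∀ w, HasFDerivAt f (innerSL ℝ (gradf w)) w) {Lf : NNReal}
    (hlip : LipschitzWith Lf gradf) (hL : (Lf : ℝ) < L) :
    Summable fun k => ‖u (k + 2) - u (k + 1)‖ ^ 2 := by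
  have hc : 0 < (L - Lf) / 2 := by linarith
  refine (summable_mul_left_iff hc.ne').1 <| summable_of_add_le_of_bddBelow
    (a := fun k => f (u (k + 1))) (hf.mono (range_comp_subset_range _ f))
    (fun k => by positivity) fun k => ?_
  exact sufficient_decrease_of_proxModel_le hderiv hlip (hu.proxModel_le h1 (by omega))

theorem cauchySeq_toL1 [IsFiniteMeasure μ] (hu : IsProxGradSeq μ deltaZ f gradf L u)
    (h1 : jfun μ deltaZ (u 1) ≠ ⊤) (hf : BddBelow (range f))
    (hderiv : ∀ w, HasFDerivAt f (innerSL ℝ (gradf w)) w) {Lf : NNReal}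
    (hlip : LipschitzWith Lf gradf) (hL : (Lf : ℝ) < L) :
    CauchySeq fun k => Lp.toL1 (u k) := by
  have hsum := hu.summable_norm_sub_sq h1 hf hderiv hlip hL
  rw [← cauchySeq_shift 1]
  refine cauchySeq_of_edist_le_of_tsum_ne_top _ (fun k => ?_) (ENNReal.ofReal_tsum_of_nonneg
    (fun k => by positivity) hsum ▸ ENNReal.ofReal_ne_top)
  rw [edist_comm]
  exact Lp.edist_toL1_le_norm_sub_sq (hu.ae_sub_mem_range_intCast h1 (by omega))

end IsProxGradSeq

end ProximalGradientLp

theorem discrete_controls_L1_convergence_general (n : ℕ) (Ω : Set (EuclideanSpace ℝ (Fin n)))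
    (hfin : volume Ω < ⊤)
    (f : Lp ℝ 2 (volume.restrict Ω) → ℝ)
    (hfbdd : ∃ m : ℝ, ∀ w, m ≤ f w)
    (gradf : Lp ℝ 2 (volume.restrict Ω) → Lp ℝ 2 (volume.restrict Ω))
    (hderiv : ∀ w, HasFDerivAt f ((innerSL ℝ) (gradf w)) w)
    (Lf : NNReal) (hlip : LipschitzWith Lf gradf)
    (L : ℝ) (hL : (Lf : ℝ) < L)
    (u : ℕ → Lp ℝ 2 (volume.restrict Ω))
    (hiter : ∀ k : ℕ, ∀ w : Lp ℝ 2 (volume.restrict Ω),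
      ((f (u k) + inner ℝ (gradf (u k)) (u (k+1) - u k) + L / 2 * ‖u (k+1) - u k‖ ^ 2 : ℝ) : EReal)
          + jfun (volume.restrict Ω) deltaZ (u (k+1)) ≤
        ((f (u k) + inner ℝ (gradf (u k)) (w - u k) + L / 2 * ‖w - u k‖ ^ 2 : ℝ) : EReal)
          + jfun (volume.restrict Ω) deltaZ w)
    (hj1 : jfun (volume.restrict Ω) deltaZ (u 1) ≠ ⊤) :
    (∀ k : ℕ, 1 ≤ k → ∀ p : ℝ, 1 ≤ p →
      (∫⁻ x, (‖(u (k+1) : EuclideanSpace ℝ (Fin n) → ℝ) x -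
          (u k : EuclideanSpace ℝ (Fin n) → ℝ) x‖₊ : ENNReal) ∂(volume.restrict Ω)) ≤
        ∫⁻ x, ENNReal.ofReal (|(u (k+1) : EuclideanSpace ℝ (Fin n) → ℝ) x -
          (u k : EuclideanSpace ℝ (Fin n) → ℝ) x| ^ p) ∂(volume.restrict Ω))
    ∧ (∀ ε : ℝ, 0 < ε → ∃ N : ℕ, ∀ m ≥ N, ∀ k ≥ N,
        (∫⁻ x, (‖(u m : EuclideanSpace ℝ (Fin n) → ℝ) x -
          (u k : EuclideanSpace ℝ (Fin n) → ℝ) x‖₊ : ENNReal) ∂(volume.restrict Ω))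
          < ENNReal.ofReal ε)
    ∧ (∃ w : EuclideanSpace ℝ (Fin n) → ℝ,
        Tendsto (fun k : ℕ => ∫⁻ x, (‖(u k : EuclideanSpace ℝ (Fin n) → ℝ) x -
          w x‖₊ : ENNReal) ∂(volume.restrict Ω)) atTop (nhds 0))
    ∧ (∀ ustar : Lp ℝ 2 (volume.restrict Ω),
        (∃ ks : ℕ → ℕ, StrictMono ks ∧ ∀ w : Lp ℝ 2 (volume.restrict Ω),
          Tendsto (fun m : ℕ => (inner ℝ (u (ks m)) w : ℝ)) atTop (nhds (inner ℝ ustar w : ℝ))) →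
        Tendsto (fun k : ℕ => ∫⁻ x, (‖(u k : EuclideanSpace ℝ (Fin n) → ℝ) x -
          (ustar : EuclideanSpace ℝ (Fin n) → ℝ) x‖₊ : ENNReal) ∂(volume.restrict Ω))
          atTop (nhds 0)) := by
  have : IsFiniteMeasure (volume.restrict Ω) := ⟨by rwa [Measure.restrict_apply_univ]⟩
  have hu : IsProxGradSeq (volume.restrict Ω) deltaZ f gradf L u :=
    fun k => isMinOn_univ_iff.2 (hiter k)
  obtain ⟨c, hc⟩ := hfbdd
  have hcauchy := hu.cauchySeq_toL1 hj1 ⟨c, forall_mem_range.2 hc⟩ hderiv hlip hL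
  obtain ⟨W, hW⟩ := cauchySeq_tendsto_of_complete hcauchy
  have hW0 : Tendsto (fun k => edist (Lp.toL1 (u k)) W) atTop (nhds 0) :=
    tendsto_iff_edist_tendsto_0.1 hW
  refine ⟨fun k hk p hp => ?_, fun ε hε => ?_, ⟨W, ?_⟩, ?_⟩
  · exact lintegral_nnnorm_le_lintegral_rpow_of_ae_int (hu.ae_sub_mem_range_intCast hj1 hk) hp
  · obtain ⟨N, hN⟩ := EMetric.cauchySeq_iff.1 hcauchy _ (ENNReal.ofReal_pos.2 hε)
    refine ⟨N, fun m hm k hk => ?_⟩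
    rw [← Lp.edist_toL1 (u m) (Lp.coeFn_toL1 (u k))]
    exact hN m hm k hk
  · simpa only [Lp.edist_toL1 _ (EventuallyEq.refl _ W)] using hW0
  · rintro ustar ⟨ks, hks, hweak⟩
    have hW_eq := Lp.ae_eq_of_tendsto_inner_of_tendsto_toL1 hweak (hW.comp hks.tendsto_atTop)
    simpa only [Lp.edist_toL1 _ hW_eq.symm] using hW0

/-- for `g = δ_ℤ`, `f` satisfying Assumption A, `L > L_f` and proximal gradient
iterates with `j(u_1) < ∞`, one has `‖u_{k+1} − u_k‖_{L^p}^p ≥ ‖u_{k+1} − u_k‖_{L¹}` for all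
`p ∈ [1, ∞)` and `k ≥ 1`, the sequence `(u_k)` is Cauchy in `L¹(Ω)` and converges strongly in
`L¹(Ω)`; in particular every weak sequential limit point `u*` in `L²(Ω)` is the strong
`L¹(Ω)`-limit of `(u_k)`. -/
theorem discrete_controls_L1_convergence (n : ℕ) (Ω : Set (EuclideanSpace ℝ (Fin n)))
    (hΩ : MeasurableSet Ω) (hfin : volume Ω < ⊤)
    (f : Lp ℝ 2 (volume.restrict Ω) → ℝ)
    (hfbdd : ∃ m : ℝ, ∀ w, m ≤ f w)
    (gradf : Lp ℝ 2 (volume.restrict Ω) → Lp ℝ 2 (volume.restrict Ω))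
    (hderiv : ∀ w, HasFDerivAt f ((innerSL ℝ) (gradf w)) w)
    (Lf : NNReal) (hlip : LipschitzWith Lf gradf)
    (L : ℝ) (hL : (Lf : ℝ) < L)
    (u : ℕ → Lp ℝ 2 (volume.restrict Ω))
    (hiter : ∀ k : ℕ, ∀ w : Lp ℝ 2 (volume.restrict Ω),
      ((f (u k) + inner ℝ (gradf (u k)) (u (k+1) - u k) + L / 2 * ‖u (k+1) - u k‖ ^ 2 : ℝ) : EReal)
          + jfun (volume.restrict Ω) deltaZ (u (k+1)) ≤
        ((f (u k) + inner ℝ (gradf (u k)) (w - u k) + L / 2 * ‖w - u k‖ ^ 2 : ℝ) : EReal)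
          + jfun (volume.restrict Ω) deltaZ w)
    (hj1 : jfun (volume.restrict Ω) deltaZ (u 1) ≠ ⊤) :
    (∀ k : ℕ, 1 ≤ k → ∀ p : ℝ, 1 ≤ p →
      (∫⁻ x, (‖(u (k+1) : EuclideanSpace ℝ (Fin n) → ℝ) x -
          (u k : EuclideanSpace ℝ (Fin n) → ℝ) x‖₊ : ENNReal) ∂(volume.restrict Ω)) ≤
        ∫⁻ x, ENNReal.ofReal (|(u (k+1) : EuclideanSpace ℝ (Fin n) → ℝ) x -
          (u k : EuclideanSpace ℝ (Fin n) → ℝ) x| ^ p) ∂(volume.restrict Ω))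
    ∧ (∀ ε : ℝ, 0 < ε → ∃ N : ℕ, ∀ m ≥ N, ∀ k ≥ N,
        (∫⁻ x, (‖(u m : EuclideanSpace ℝ (Fin n) → ℝ) x -
          (u k : EuclideanSpace ℝ (Fin n) → ℝ) x‖₊ : ENNReal) ∂(volume.restrict Ω))
          < ENNReal.ofReal ε)
    ∧ (∃ w : EuclideanSpace ℝ (Fin n) → ℝ,
        Tendsto (fun k : ℕ => ∫⁻ x, (‖(u k : EuclideanSpace ℝ (Fin n) → ℝ) x -
          w x‖₊ : ENNReal) ∂(volume.restrict Ω)) atTop (nhds 0))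
    ∧ (∀ ustar : Lp ℝ 2 (volume.restrict Ω),
        (∃ ks : ℕ → ℕ, StrictMono ks ∧ ∀ w : Lp ℝ 2 (volume.restrict Ω),
          Tendsto (fun m : ℕ => (inner ℝ (u (ks m)) w : ℝ)) atTop (nhds (inner ℝ ustar w : ℝ))) →
        Tendsto (fun k : ℕ => ∫⁻ x, (‖(u k : EuclideanSpace ℝ (Fin n) → ℝ) x -
          (ustar : EuclideanSpace ℝ (Fin n) → ℝ) x‖₊ : ENNReal) ∂(volume.restrict Ω))
          atTop (nhds 0)) :=
  discrete_controls_L1_convergence_general n Ω hfin f hfbdd gradf hderiv Lf hlip L hL u hiter hj1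
end

section
/- Let p ∈ (0,1), β > 0, α ≥ 0, L > 0 and b ∈ (0, ∞]. For arbitrary q, w ∈ ℝ, every global minimizer u of the function u ↦ −q·u + (L/2)(u − w)² + (α/2)u² + β|u|^p over the set {u ∈ ℝ : |u| ≤ b} satisfies u = 0 or |u| ≥ min(b, ((α + L)/(2β(1 − p)))^{1/(p−2)}). Equivalently, for g(u) := |u|^p + δ_{[−b,b]}(u) and s > 0, every u ∈ prox_{sg}(q) satisfies u = 0 or |u| ≥ min(b, (2s(1 − p))^{1/(2−p)}). -/
/-!
Both objectives are, up to an additive constant, of the form `F v = c/2 v² - a v + β |v|^p`.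
At a nonzero minimizer `u` in the interior of the box, moving along the ray `t ↦ t u` gives
the first-order condition `c u² - a u + p β |u|^p = 0`. Subtracting it from `F u ≤ F 0` leaves
`(1 - p) β |u|^p ≤ c/2 u²`, which is the threshold bound `|u|^(2-p) ≥ 2β(1-p)/c`.
-/

open Classical in
/-- The `L^p`-type penalty with box constraint: `g(u) = |u|^p + δ_{[-b,b]}(u)`, where
`b ∈ (0, ∞]` and `δ_{[-b,b]}` is the indicator function of `[-b, b]`. -/
noncomputable def gLp (p : ℝ) (b : ENNReal) (u : ℝ) : EReal :=
  if ENNReal.ofReal |u| ≤ b then ((|u| ^ p : ℝ) : EReal) else ⊤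

noncomputable def quadLpObjective (c a β p v : ℝ) : ℝ :=
  c / 2 * v ^ 2 - a * v + β * |v| ^ p

section quadLpObjective

variable {c a β p u : ℝ}

lemma hasDerivAt_quadLpObjective_mul (c a β p u : ℝ) :
    HasDerivAt (fun t => quadLpObjective c a β p (t * u))
      (c * u ^ 2 - a * u + p * β * |u| ^ p) 1 := by
  have hpow : HasDerivAt (fun t : ℝ => t ^ p) p 1 := by
    simpa using Real.hasDerivAt_rpow_const (x := 1) (p := p) (Or.inl one_ne_zero)
  have hpoly : HasDerivAt (fun t : ℝ => c / 2 * u ^ 2 * t ^ 2 - a * u * t + β * |u| ^ p * t ^ p)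
      (c * u ^ 2 - a * u + p * β * |u| ^ p) 1 :=
    ((((hasDerivAt_pow 2 (1 : ℝ)).const_mul (c / 2 * u ^ 2)).sub
      ((hasDerivAt_id (1 : ℝ)).const_mul (a * u))).add
        (hpow.const_mul (β * |u| ^ p))).congr_deriv (by norm_num; ring)
  refine hpoly.congr_of_eventuallyEq ?_
  filter_upwards [lt_mem_nhds one_pos] with t ht
  rw [quadLpObjective, abs_mul, abs_of_pos ht, Real.mul_rpow ht.le (abs_nonneg u)]
  ring

lemma quadLpObjective_deriv_eq_zero
    (hloc : IsLocalMin (fun t => quadLpObjective c a β p (t * u)) 1) :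
    c * u ^ 2 - a * u + p * β * |u| ^ p = 0 :=
  hloc.hasDerivAt_eq_zero (hasDerivAt_quadLpObjective_mul c a β p u)

lemma mul_abs_rpow_le_of_isLocalMin (hp : 0 < p)
    (hzero : quadLpObjective c a β p u ≤ quadLpObjective c a β p 0)
    (hloc : IsLocalMin (fun t => quadLpObjective c a β p (t * u)) 1) :
    (1 - p) * β * |u| ^ p ≤ c / 2 * u ^ 2 := by
  have hderiv := quadLpObjective_deriv_eq_zero hloc
  simp only [quadLpObjective, abs_zero, Real.zero_rpow hp.ne'] at hzero
  linarith

lemma rpow_le_abs_of_mul_abs_rpow_le (hc : 0 < c) (hβ : 0 ≤ β) (hp : p ≤ 1) (hu : u ≠ 0)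
    (h : (1 - p) * β * |u| ^ p ≤ c / 2 * u ^ 2) :
    (2 * β * (1 - p) / c) ^ (1 / (2 - p)) ≤ |u| := by
  have hr : 0 < |u| := abs_pos.mpr hu
  have hsq : u ^ 2 = |u| ^ (2 - p) * |u| ^ p := by
    rw [← Real.rpow_add hr, sub_add_cancel, Real.rpow_two, sq_abs]
  have hbase : 2 * β * (1 - p) / c ≤ |u| ^ (2 - p) := by
    rw [div_le_iff₀ hc]
    rw [hsq] at h
    nlinarith [Real.rpow_pos_of_pos hr p]
  calc (2 * β * (1 - p) / c) ^ (1 / (2 - p))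
      ≤ (|u| ^ (2 - p)) ^ (2 - p)⁻¹ := by
        rw [one_div]
        exact Real.rpow_le_rpow (by positivity) hbase (inv_nonneg.2 (by linarith))
    _ = |u| := Real.rpow_rpow_inv hr.le (by linarith)

lemma isLocalMin_mul_of_isMinOn {f : ℝ → ℝ} {b : ENNReal}
    (hmin : IsMinOn f {v | ENNReal.ofReal |v| ≤ b} u) (hu : ENNReal.ofReal |u| < b) :
    IsLocalMin (fun t => f (t * u)) 1 := by
  have hopen : IsOpen {v : ℝ | ENNReal.ofReal |v| < b} :=
    isOpen_lt (ENNReal.continuous_ofReal.comp continuous_abs) continuous_const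
  have hloc : IsLocalMin f (1 * u) := by
    rw [one_mul]
    exact hmin.isLocalMin
      (Filter.mem_of_superset (hopen.mem_nhds hu) (Set.ofPred_subset_ofPred.2 fun _ => le_of_lt))
  exact hloc.comp_continuous (g := fun t => t * u) (continuous_mul_const u).continuousAt

theorem min_le_abs_of_isMinOn_quadLpObjective (hc : 0 < c) (hβ : 0 ≤ β) (hp₀ : 0 < p)
    (hp₁ : p ≤ 1) {b : ENNReal}
    (hmin : IsMinOn (quadLpObjective c a β p) {v | ENNReal.ofReal |v| ≤ b} u) (hu : u ≠ 0) :
    min b (ENNReal.ofReal ((2 * β * (1 - p) / c) ^ (1 / (2 - p)))) ≤ ENNReal.ofReal |u| := by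
  rcases le_or_gt b (ENNReal.ofReal |u|) with hbu | hub
  · exact (min_le_left _ _).trans hbu
  have hzero := hmin (show (0 : ℝ) ∈ {v | ENNReal.ofReal |v| ≤ b} by simp)
  have hineq := mul_abs_rpow_le_of_isLocalMin hp₀ hzero (isLocalMin_mul_of_isMinOn hmin hub)
  exact (min_le_right _ _).trans
    (ENNReal.ofReal_le_ofReal (rpow_le_abs_of_mul_abs_rpow_le hc hβ hp₁ hu hineq))

end quadLpObjective

lemma IsProx.ofReal_abs_le_of_gLp {p s q u : ℝ} {b : ENNReal} (hs : 0 < s)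
    (h : IsProx (gLp p b) s q u) : ENNReal.ofReal |u| ≤ b := by
  by_contra hub
  have h0 := h 0
  simp only [gLp, if_neg hub, EReal.coe_mul_top_of_pos hs, abs_zero, ENNReal.ofReal_zero,
    zero_le, if_true] at h0
  rw [EReal.coe_add_top, top_le_iff] at h0
  exact EReal.coe_ne_top _ h0

lemma IsProx.isMinOn_gLp {p s q u : ℝ} {b : ENNReal} (hs : 0 < s)
    (h : IsProx (gLp p b) s q u) :
    IsMinOn (quadLpObjective 1 q s p) {v | ENNReal.ofReal |v| ≤ b} u := by
  refine isMinOn_iff.2 fun v hv => ?_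
  have huv := h v
  simp only [gLp, if_pos (h.ofReal_abs_le_of_gLp hs),
    if_pos (show ENNReal.ofReal |v| ≤ b from hv), ← EReal.coe_mul, ← EReal.coe_add,
    EReal.coe_le_coe_iff] at huv
  simp only [quadLpObjective]
  linear_combination huv

lemma div_rpow_one_div_sub_two {x y : ℝ} (hx : 0 ≤ x) (hy : 0 ≤ y) (p : ℝ) :
    (x / y) ^ (1 / (p - 2)) = (y / x) ^ (1 / (2 - p)) := by
  rw [← neg_sub 2 p, div_neg, Real.rpow_neg (div_nonneg hx hy),
    ← Real.inv_rpow (div_nonneg hx hy), inv_div]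

theorem Lp_prox_sparsity_general (p : ℝ) (hp : 0 < p ∧ p < 1) (β : ℝ) (hβ : 0 < β)
    (α : ℝ) (hα : 0 ≤ α) (L : ℝ) (hL : 0 < L) (b : ENNReal) :
    (∀ q w u : ℝ,
      (ENNReal.ofReal |u| ≤ b ∧
        ∀ v : ℝ, ENNReal.ofReal |v| ≤ b →
          -q * u + L / 2 * (u - w) ^ 2 + α / 2 * u ^ 2 + β * |u| ^ p ≤
            -q * v + L / 2 * (v - w) ^ 2 + α / 2 * v ^ 2 + β * |v| ^ p) →
      u = 0 ∨ min b (ENNReal.ofReal (((α + L) / (2 * β * (1 - p))) ^ (1 / (p - 2))))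
        ≤ ENNReal.ofReal |u|)
    ∧ (∀ s : ℝ, 0 < s → ∀ q u : ℝ, IsProx (gLp p b) s q u →
        u = 0 ∨ min b (ENNReal.ofReal ((2 * s * (1 - p)) ^ (1 / (2 - p))))
          ≤ ENNReal.ofReal |u|) := by
  obtain ⟨hp₀, hp₁⟩ := hp
  constructor
  · rintro q w u ⟨-, hmin⟩
    have hF : IsMinOn (quadLpObjective (α + L) (q + L * w) β p)
        {v | ENNReal.ofReal |v| ≤ b} u :=
      isMinOn_iff.2 fun v hv => by
        simp only [quadLpObjective]
        linear_combination hmin v hv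
    rw [div_rpow_one_div_sub_two (by positivity) (by nlinarith)]
    exact or_iff_not_imp_left.2
      (min_le_abs_of_isMinOn_quadLpObjective (by positivity) hβ.le hp₀ hp₁.le hF)
  · intro s hs q u hprox
    have hthreshold := min_le_abs_of_isMinOn_quadLpObjective one_pos hs.le hp₀ hp₁.le
      (hprox.isMinOn_gLp hs)
    rw [div_one] at hthreshold
    exact or_iff_not_imp_left.2 hthreshold

/-- for `p ∈ (0,1)`, `β > 0`, `α ≥ 0`, `L > 0`, `b ∈ (0, ∞]`, every global
minimizer `u` of `u ↦ −q·u + (L/2)(u − w)² + (α/2)u² + β|u|^p` over `{|u| ≤ b}` satisfies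
`u = 0` or `|u| ≥ min(b, ((α+L)/(2β(1−p)))^{1/(p−2)})`; equivalently, for
`g = |·|^p + δ_{[−b,b]}` and `s > 0`, every `u ∈ prox_{s g}(q)` satisfies `u = 0` or
`|u| ≥ min(b, (2s(1−p))^{1/(2−p)})`. -/
theorem Lp_prox_sparsity (p : ℝ) (hp : 0 < p ∧ p < 1) (β : ℝ) (hβ : 0 < β)
    (α : ℝ) (hα : 0 ≤ α) (L : ℝ) (hL : 0 < L) (b : ENNReal) (hb : 0 < b) :
    (∀ q w u : ℝ,
      (ENNReal.ofReal |u| ≤ b ∧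
        ∀ v : ℝ, ENNReal.ofReal |v| ≤ b →
          -q * u + L / 2 * (u - w) ^ 2 + α / 2 * u ^ 2 + β * |u| ^ p ≤
            -q * v + L / 2 * (v - w) ^ 2 + α / 2 * v ^ 2 + β * |v| ^ p) →
      u = 0 ∨ min b (ENNReal.ofReal (((α + L) / (2 * β * (1 - p))) ^ (1 / (p - 2))))
        ≤ ENNReal.ofReal |u|)
    ∧ (∀ s : ℝ, 0 < s → ∀ q u : ℝ, IsProx (gLp p b) s q u →
        u = 0 ∨ min b (ENNReal.ofReal ((2 * s * (1 - p)) ^ (1 / (2 - p))))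
          ≤ ENNReal.ofReal |u|) :=
  Lp_prox_sparsity_general p hp β hβ α hα L hL b
end
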